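/- arXiv:0911.0200 — 9 statements merged into one kernel-verified Lean document; each statement's English description precedes it below -/
import Mathlib

section
/- Let G and H be directed graphs, and let P_G and P_H be their 2-poset representations. Then there exists a graph homomorphism from G to H if and only if there exists a k-poset homomorphism from P_G to P_H. -/
/-- A homomorphism of `k`-posets: an order-preserving, label-preserving map. -/
def IsKPosetHom {k : ℕ} {P Q : Type*} [PartialOrder P] [PartialOrder Q]
    (c : P → Fin k) (d : Q → Fin k) (f : P → Q) : Prop :=
  Monotone f ∧ ∀ x, d (f x) = c x

/-- The underlying set of the 2-poset representation `P_G` of a directed graph with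
vertex type `V` and edge relation `E`: the set `(V ∪ E) × {0,1}`. -/
abbrev PGElem {V : Type*} (E : V → V → Prop) : Type _ :=
  (V ⊕ {p : V × V // E p.1 p.2}) × Bool

/-- The covering (strict) comparabilities of `P_G`:
`(a,0) < (a,1)` for vertices `a`; `(e,1) < (e,0)` for edges `e`; and
`(u,0) < ((u,v),0)`, `((u,v),1) < (v,1)` for each edge `(u,v)`. -/
def PGlt {V : Type*} (E : V → V → Prop) : PGElem E → PGElem E → Prop
  | (Sum.inl v, false), (Sum.inl w, true) => v = w
  | (Sum.inr e, true), (Sum.inr f, false) => e = f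
  | (Sum.inl u, false), (Sum.inr e, false) => (e : V × V).1 = u
  | (Sum.inr e, true), (Sum.inl v, true) => (e : V × V).2 = v
  | _, _ => False

instance {V : Type*} (E : V → V → Prop) : PartialOrder (PGElem E) where
  le x y := x = y ∨ PGlt E x y
  le_refl x := Or.inl rfl
  le_trans x y z hxy hyz := by
    rcases hxy with rfl | hxy
    · exact hyz
    rcases hyz with rfl | hyz
    · exact Or.inr hxy
    exfalso
    rcases x with ⟨a | a, _ | _⟩ <;> rcases y with ⟨b | b, _ | _⟩ <;>
      rcases z with ⟨c | c, _ | _⟩ <;> simp [PGlt] at hxy hyz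
  le_antisymm x y hxy hyx := by
    rcases hxy with rfl | hxy
    · rfl
    rcases hyx with rfl | hyx
    · rfl
    exfalso
    rcases x with ⟨a | a, _ | _⟩ <;> rcases y with ⟨b | b, _ | _⟩ <;>
      simp [PGlt] at hxy hyx

/-- The labeling of `P_G`: the label of `(a, b)` is `b`. -/
def PGLabel {V : Type*} (E : V → V → Prop) : PGElem E → Fin 2 :=
  fun x => if x.2 then 1 else 0

lemma pg_label_snd {V W : Type*} {E : V → V → Prop} {F : W → W → Prop}
    {z : PGElem F} {x : PGElem E} (h : PGLabel F z = PGLabel E x) : z.2 = x.2 := by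
  rcases z with ⟨_, _ | _⟩ <;> rcases x with ⟨_, _ | _⟩ <;> simp_all [PGLabel]

lemma pg_vertex_shape {W : Type*} {F : W → W → Prop} {x y : PGElem F}
    (h : x ≤ y) (hx : x.2 = false) (hy : y.2 = true) :
    ∃ w : W, x = (Sum.inl w, false) ∧ y = (Sum.inl w, true) := by
  rcases h with rfl | h
  · rw [hx] at hy; exact absurd hy (by simp)
  · rcases x with ⟨a | a, _ | _⟩ <;> rcases y with ⟨b | b, _ | _⟩ <;>
      simp_all [PGlt]

lemma pg_edge_shape {W : Type*} {F : W → W → Prop} {x y : PGElem F}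
    (h : x ≤ y) (hx : x.2 = true) (hy : y.2 = false) :
    ∃ f : {p : W × W // F p.1 p.2}, x = (Sum.inr f, true) ∧ y = (Sum.inr f, false) := by
  rcases h with rfl | h
  · rw [hx] at hy; exact absurd hy (by simp)
  · rcases x with ⟨a | a, _ | _⟩ <;> rcases y with ⟨b | b, _ | _⟩ <;>
      simp_all [PGlt]

lemma pg_src {W : Type*} {F : W → W → Prop} {w : W} {f : {p : W × W // F p.1 p.2}}
    (h : ((Sum.inl w, false) : PGElem F) ≤ (Sum.inr f, false)) : (f : W × W).1 = w := by
  rcases h with h | h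
  · simp at h
  · exact h

lemma pg_tgt {W : Type*} {F : W → W → Prop} {w : W} {f : {p : W × W // F p.1 p.2}}
    (h : ((Sum.inr f, true) : PGElem F) ≤ (Sum.inl w, true)) : (f : W × W).2 = w := by
  rcases h with h | h
  · simp at h
  · exact h

/-- There is a graph homomorphism `G → H` iff there is a 2-poset homomorphism
`P_G → P_H`. -/
theorem graph_hom_iff_pg_hom {V W : Type*} (E : V → V → Prop) (F : W → W → Prop) :
    (∃ h : V → W, ∀ u v, E u v → F (h u) (h v)) ↔
      (∃ g : PGElem E → PGElem F, IsKPosetHom (PGLabel E) (PGLabel F) g) := by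
  constructor
  · rintro ⟨h, hh⟩
    refine ⟨fun x => (Sum.elim (fun v => Sum.inl (h v))
      (fun e : {p : V × V // E p.1 p.2} => Sum.inr ⟨(h e.1.1, h e.1.2), hh _ _ e.2⟩) x.1,
        x.2), ?_, ?_⟩
    · intro x y hxy
      rcases hxy with rfl | hxy
      · exact le_refl _
      · right
        rcases x with ⟨a | a, _ | _⟩ <;> rcases y with ⟨b | b, _ | _⟩ <;>
          simp only [PGlt, Sum.elim_inl, Sum.elim_inr] at hxy ⊢ <;>
          simp_all
    · intro x; rcases x with ⟨a | a, _ | _⟩ <;> rfl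
  · rintro ⟨g, gmono, glab⟩
    have key : ∀ v : V, ∃ w : W, g (Sum.inl v, false) = (Sum.inl w, false) ∧
        g (Sum.inl v, true) = (Sum.inl w, true) := fun v =>
      pg_vertex_shape
        (gmono (Or.inr (rfl : PGlt E (Sum.inl v, false) (Sum.inl v, true))))
        (pg_label_snd (glab (Sum.inl v, false)))
        (pg_label_snd (glab (Sum.inl v, true)))
    choose h hf ht using key
    refine ⟨h, fun u v huv => ?_⟩
    have e : {p : V × V // E p.1 p.2} := ⟨(u, v), huv⟩
    obtain ⟨f, hf1, hf0⟩ := pg_edge_shape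
      (gmono (a := (Sum.inr ⟨(u, v), huv⟩, true)) (b := (Sum.inr ⟨(u, v), huv⟩, false)) (Or.inr rfl))
      (pg_label_snd (glab (Sum.inr ⟨(u, v), huv⟩, true)))
      (pg_label_snd (glab (Sum.inr ⟨(u, v), huv⟩, false)))
    have hu0 : ((Sum.inl (h u), false) : PGElem F) ≤ (Sum.inr f, false) := by
      have := gmono (a := (Sum.inl u, false)) (b := (Sum.inr ⟨(u, v), huv⟩, false)) (Or.inr rfl)
      rwa [hf u, hf0] at this
    have hv1 : ((Sum.inr f, true) : PGElem F) ≤ (Sum.inl (h v), true) := by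
      have := gmono (a := (Sum.inr ⟨(u, v), huv⟩, true)) (b := (Sum.inl v, true)) (Or.inr rfl)
      rwa [ht v, hf1] at this
    have := f.2
    rwa [pg_src hu0, pg_tgt hv1] at this
end

section
/- Let G and H be directed graphs, and let L_G and L_H be their 3-poset representations (the 2-poset representations with a new greatest and new least element adjoined, both labeled 2, with L_∅ the empty 3-poset). Then G is homomorphic to H if and only if L_G is homomorphic to L_H. -/
/-- The underlying set of the 3-poset `L_G`: `P_G` with a new greatest and a new
least element adjoined. -/
abbrev LGElem {V : Type*} (E : V → V → Prop) : Type _ := WithTop (WithBot (PGElem E))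

/-- The labeling of `L_G`: the new top and bottom get label `2`, the remaining
elements keep their labels from `P_G`. -/
def LGLabel {V : Type*} (E : V → V → Prop) : LGElem E → Fin 3 :=
  fun x => WithTop.recTopCoe 2
    (fun y => WithBot.recBotCoe 2 (fun z => (PGLabel E z).castSucc) y) x

/-- There is a graph homomorphism `G → H` iff there is a 3-poset homomorphism
`L_G → L_H`. -/
theorem graph_hom_iff_lg_hom {V W : Type*} (E : V → V → Prop) (F : W → W → Prop) :
    (∃ h : V → W, ∀ u v, E u v → F (h u) (h v)) ↔
      (∃ g : LGElem E → LGElem F, IsKPosetHom (LGLabel E) (LGLabel F) g) := by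

  constructor
  · rintro ⟨h, hh⟩
    -- map on P_G
    set pmap : PGElem E → PGElem F := fun x =>
      (Sum.map h (fun e => (⟨(h e.1.1, h e.1.2), hh _ _ e.2⟩ : {p : W × W // F p.1 p.2})) x.1,
        x.2) with hpmap
    have hmono : Monotone pmap := by
      intro x y hxy
      rcases hxy with rfl | hxy
      · exact le_refl _
      refine Or.inr ?_
      rcases x with ⟨a | a, _ | _⟩ <;> rcases y with ⟨b | b, _ | _⟩ <;>
        simp_all [PGlt, hpmap] <;> subst hxy <;> rfl
    refine ⟨WithTop.map (WithBot.map pmap), hmono.withBot_map.withTop_map, ?_⟩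
    intro x
    induction x using WithTop.recTopCoe with
    | top => rfl
    | coe y =>
      induction y using WithBot.recBotCoe with
      | bot => rfl
      | coe z => rfl
  · rintro ⟨g, hm, hl⟩
    have hcast : ∀ x : PGElem E, ∃ y : PGElem F,
        g ((x : WithBot (PGElem E)) : LGElem E) = ((y : WithBot (PGElem F)) : LGElem F) := by
      intro x
      have hx := hl ((x : WithBot (PGElem E)) : LGElem E)
      match hgx : g ((x : WithBot (PGElem E)) : LGElem E) with
      | ⊤ =>
        rw [hgx] at hx
        exfalso
        have h2 : (2 : Fin 3) = (PGLabel E x).castSucc := hx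
        rcases x with ⟨a, _ | _⟩ <;> simp [PGLabel] at h2 <;> omega
      | ((y : WithBot (PGElem F)) : LGElem F) =>
        match hy : y with
        | ⊥ =>
          rw [hgx] at hx
          exfalso
          have h2 : (2 : Fin 3) = (PGLabel E x).castSucc := hx
          rcases x with ⟨a, _ | _⟩ <;> simp [PGLabel] at h2 <;> omega
        | ((z : PGElem F) : WithBot (PGElem F)) => exact ⟨z, rfl⟩
    choose g' hg' using hcast
    have hmono' : ∀ x y : PGElem E, x ≤ y → g' x ≤ g' y := by
      intro x y hxy
      have : ((x : WithBot (PGElem E)) : LGElem E) ≤ ((y : WithBot (PGElem E)) : LGElem E) := by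
        exact_mod_cast hxy
      have h2 := hm this
      rw [hg', hg'] at h2
      exact_mod_cast h2
    have hl' : ∀ x : PGElem E, PGLabel F (g' x) = PGLabel E x := by
      intro x
      have := hl ((x : WithBot (PGElem E)) : LGElem E)
      rw [hg'] at this
      have h2 : (PGLabel F (g' x)).castSucc = (PGLabel E x).castSucc := this
      exact Fin.castSucc_injective _ h2
    have hsnd : ∀ x : PGElem E, (g' x).2 = x.2 := by
      intro x
      have h0 := hl' x
      simp only [PGLabel] at h0
      cases hbb : (g' x).2 <;> cases hcc : x.2 <;> rw [hbb, hcc] at h0 <;>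
        simp only [if_true, if_false] at h0 <;> first | rfl | exact absurd h0 (by decide)
    have hb : ∀ x y : PGElem E, PGlt E x y → g' x = g' y ∨ PGlt F (g' x) (g' y) :=
      fun x y h => hmono' x y (Or.inr h)
    have hv : ∀ v : V, ∃ w : W, g' (Sum.inl v, false) = (Sum.inl w, false) ∧
        g' (Sum.inl v, true) = (Sum.inl w, true) := by
      intro v
      have hs1 := hsnd (Sum.inl v, false)
      have hs2 := hsnd (Sum.inl v, true)
      rcases hb _ _ (show PGlt E (Sum.inl v, false) (Sum.inl v, true) from rfl) with heq | hlt
      · rw [heq] at hs1; simp [hs2] at hs1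
      · rcases h1 : g' (Sum.inl v, false) with ⟨p1 | p1, p2⟩ <;>
          rcases h2 : g' (Sum.inl v, true) with ⟨q1 | q1, q2⟩ <;>
          rw [h1] at hs1 hlt <;> rw [h2] at hs2 hlt <;>
          simp only at hs1 hs2 <;> subst hs1 <;> subst hs2 <;>
          simp [PGlt] at hlt ⊢
        exact hlt.symm
    choose hfun hF hT using hv
    refine ⟨hfun, ?_⟩
    intro u v huv
    set e : {p : V × V // E p.1 p.2} := ⟨(u, v), huv⟩ with he
    have h1 := hb _ _ (show PGlt E (Sum.inl u, false) (Sum.inr e, false) from rfl)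
    have h2 := hb _ _ (show PGlt E (Sum.inr e, true) (Sum.inr e, false) from rfl)
    have h3 := hb _ _ (show PGlt E (Sum.inr e, true) (Sum.inl v, true) from rfl)
    rw [hF u] at h1
    rw [hT v] at h3
    have hs1 := hsnd (Sum.inr e, false)
    have hs2 := hsnd (Sum.inr e, true)
    rcases hef : g' (Sum.inr e, false) with ⟨f1 | f1, f2⟩ <;>
      rw [hef] at hs1 h1 h2 <;> simp only at hs1 <;> subst hs1
    · -- g'(e,false) = (inl f1, false) : derive contradiction from h2
      exfalso
      rcases het : g' (Sum.inr e, true) with ⟨r1 | r1, r2⟩ <;>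
        rw [het] at hs2 h2 <;> simp only at hs2 <;> subst hs2 <;>
        rcases h2 with h2 | h2 <;> simp [PGlt] at h2
    · -- g'(e,false) = (inr f1, false)
      rcases h1 with h1 | h1
      · simp at h1
      · have hf1 : (f1 : W × W).1 = hfun u := h1
        rcases het : g' (Sum.inr e, true) with ⟨r1 | r1, r2⟩ <;>
          rw [het] at hs2 h2 h3 <;> simp only at hs2 <;> subst hs2
        · exfalso; rcases h2 with h2 | h2 <;> simp [PGlt] at h2
        · have hr1 : r1 = f1 := by
            rcases h2 with h2 | h2
            · simp at h2
            · exact h2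
          rw [hr1] at h3
          rcases h3 with h3 | h3
          · simp at h3
          · have hf2 : (f1 : W × W).2 = hfun v := h3
            have := f1.2
            rw [hf1, hf2] at this
            exact this
end

section
/- For a directed graph G, the 3-poset L_G (the 2-poset representation of G with new top and bottom elements labeled 2 adjoined) is a lattice if and only if G is loopless (has no edge from a vertex to itself). -/
section Helpers
variable {V : Type*} {E : V → V → Prop}

lemma pg_le_iff (x y : PGElem E) : x ≤ y ↔ x = y ∨ PGlt E x y := Iff.rfl

lemma isLUB_of_le {α : Type*} [Preorder α] {x y : α} (h : x ≤ y) : IsLUB {x, y} y := by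
  constructor
  · rintro t (rfl | rfl)
    · exact h
    · exact le_refl _
  · exact fun w hw => hw (by simp)

lemma isGLB_of_le {α : Type*} [Preorder α] {x y : α} (h : x ≤ y) : IsGLB {x, y} x := by
  constructor
  · rintro t (rfl | rfl)
    · exact le_refl _
    · exact h
  · exact fun w hw => hw (by simp)

lemma isLUB_coe {p q z : PGElem E} (hp : p ≤ z) (hq : q ≤ z)
    (hmin : ∀ w : PGElem E, p ≤ w → q ≤ w → z ≤ w) :
    IsLUB ({((p : WithBot (PGElem E)) : LGElem E), ((q : WithBot (PGElem E)) : LGElem E)} :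
      Set (LGElem E)) ((z : WithBot (PGElem E)) : LGElem E) := by
  constructor
  · rintro t (rfl | rfl)
    · exact_mod_cast hp
    · exact_mod_cast hq
  · intro w hw
    have h1 : ((p : WithBot (PGElem E)) : LGElem E) ≤ w := hw (by simp)
    have h2 : ((q : WithBot (PGElem E)) : LGElem E) ≤ w := hw (by simp)
    induction w using WithTop.recTopCoe with
    | top => exact le_top
    | coe w =>
      induction w using WithBot.recBotCoe with
      | bot => simp at h1
      | coe w => exact_mod_cast hmin w (by exact_mod_cast h1) (by exact_mod_cast h2)

lemma isLUB_top {p q : PGElem E} (h : ∀ w : PGElem E, p ≤ w → q ≤ w → False) :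
    IsLUB ({((p : WithBot (PGElem E)) : LGElem E), ((q : WithBot (PGElem E)) : LGElem E)} :
      Set (LGElem E)) ⊤ := by
  constructor
  · rintro t _; exact le_top
  · intro w hw
    have h1 : ((p : WithBot (PGElem E)) : LGElem E) ≤ w := hw (by simp)
    have h2 : ((q : WithBot (PGElem E)) : LGElem E) ≤ w := hw (by simp)
    induction w using WithTop.recTopCoe with
    | top => exact le_refl _
    | coe w =>
      induction w using WithBot.recBotCoe with
      | bot => simp at h1
      | coe w => exact absurd (h w (by exact_mod_cast h1) (by exact_mod_cast h2)) not_false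

lemma isGLB_coe {p q z : PGElem E} (hp : z ≤ p) (hq : z ≤ q)
    (hmax : ∀ w : PGElem E, w ≤ p → w ≤ q → w ≤ z) :
    IsGLB ({((p : WithBot (PGElem E)) : LGElem E), ((q : WithBot (PGElem E)) : LGElem E)} :
      Set (LGElem E)) ((z : WithBot (PGElem E)) : LGElem E) := by
  constructor
  · rintro t (rfl | rfl)
    · exact_mod_cast hp
    · exact_mod_cast hq
  · intro w hw
    have h1 : w ≤ ((p : WithBot (PGElem E)) : LGElem E) := hw (by simp)
    have h2 : w ≤ ((q : WithBot (PGElem E)) : LGElem E) := hw (by simp)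
    induction w using WithTop.recTopCoe with
    | top => simp at h1
    | coe w =>
      induction w using WithBot.recBotCoe with
      | bot => exact bot_le
      | coe w => exact_mod_cast hmax w (by exact_mod_cast h1) (by exact_mod_cast h2)

lemma isGLB_bot {p q : PGElem E} (h : ∀ w : PGElem E, w ≤ p → w ≤ q → False) :
    IsGLB ({((p : WithBot (PGElem E)) : LGElem E), ((q : WithBot (PGElem E)) : LGElem E)} :
      Set (LGElem E)) ⊥ := by
  constructor
  · rintro t _; exact bot_le
  · intro w hw
    have h1 : w ≤ ((p : WithBot (PGElem E)) : LGElem E) := hw (by simp)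
    have h2 : w ≤ ((q : WithBot (PGElem E)) : LGElem E) := hw (by simp)
    induction w using WithTop.recTopCoe with
    | top => simp at h1
    | coe w =>
      induction w using WithBot.recBotCoe with
      | bot => exact le_refl _
      | coe w => exact absurd (h w (by exact_mod_cast h1) (by exact_mod_cast h2)) not_false

end Helpers

section Core
variable {V : Type*} {E : V → V → Prop}

/-- Embed `P_G` into `L_G`. -/
abbrev lg (p : PGElem E) : LGElem E := ((p : WithBot (PGElem E)) : LGElem E)

lemma pg_le {p q : PGElem E} (h : PGlt E p q) : p ≤ q := Or.inr h

lemma lg_le_lg {p q : PGElem E} (h : p ≤ q) : lg p ≤ lg q :=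
  WithTop.coe_le_coe.mpr (WithBot.coe_le_coe.mpr h)

lemma isLUB_of_le' {α : Type*} [Preorder α] {x y : α} (h : y ≤ x) : IsLUB {x, y} x := by
  rw [Set.pair_comm]; exact isLUB_of_le h

lemma isGLB_of_le' {α : Type*} [Preorder α] {x y : α} (h : y ≤ x) : IsGLB {x, y} y := by
  rw [Set.pair_comm]; exact isGLB_of_le h

lemma exists_isLUB_pg (hE : ∀ v, ¬ E v v) (p q : PGElem E) :
    ∃ z : LGElem E, IsLUB {lg p, lg q} z := by
  rcases p with ⟨v | e, _ | _⟩
  · -- p = A v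
    rcases q with ⟨w | f, _ | _⟩
    · -- A w
      by_cases h : v = w
      · subst h; exact ⟨_, isLUB_of_le le_rfl⟩
      · refine ⟨⊤, isLUB_top ?_⟩
        rintro ⟨u | g, _ | _⟩ h1' h2' <;> simp_all [pg_le_iff, PGlt, hE]
    · -- B w
      by_cases h : v = w
      · subst h; exact ⟨_, isLUB_of_le (lg_le_lg (pg_le rfl))⟩
      · refine ⟨⊤, isLUB_top ?_⟩
        rintro ⟨u | g, _ | _⟩ h1' h2' <;> simp_all [pg_le_iff, PGlt, hE]
    · -- C f
      by_cases h : (f : V × V).1 = v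
      · exact ⟨_, isLUB_of_le (lg_le_lg (pg_le h))⟩
      · refine ⟨⊤, isLUB_top ?_⟩
        rintro ⟨u | g, _ | _⟩ h1' h2' <;> simp_all [pg_le_iff, PGlt, hE]
    · -- D f
      have hf := f.2
      by_cases h1 : (f : V × V).1 = v
      · refine ⟨lg (Sum.inr f, false), isLUB_coe (pg_le h1) (pg_le rfl) ?_⟩
        rintro ⟨u | g, _ | _⟩ h1' h2' <;> simp_all [pg_le_iff, PGlt, hE]
      · by_cases h2 : (f : V × V).2 = v
        · refine ⟨lg (Sum.inl v, true), isLUB_coe (pg_le rfl) (pg_le h2) ?_⟩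
          rintro ⟨u | g, _ | _⟩ h1' h2' <;> simp_all [pg_le_iff, PGlt, hE]
        · refine ⟨⊤, isLUB_top ?_⟩
          rintro ⟨u | g, _ | _⟩ h1' h2' <;> simp_all [pg_le_iff, PGlt, hE]
  · -- p = B v
    rcases q with ⟨w | f, _ | _⟩
    · -- A w
      by_cases h : w = v
      · subst h; exact ⟨_, isLUB_of_le' (lg_le_lg (pg_le rfl))⟩
      · refine ⟨⊤, isLUB_top ?_⟩
        rintro ⟨u | g, _ | _⟩ h1' h2' <;> simp_all [pg_le_iff, PGlt, hE]
    · -- B w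
      by_cases h : v = w
      · subst h; exact ⟨_, isLUB_of_le le_rfl⟩
      · refine ⟨⊤, isLUB_top ?_⟩
        rintro ⟨u | g, _ | _⟩ h1' h2' <;> simp_all [pg_le_iff, PGlt, hE]
    · -- C f
      refine ⟨⊤, isLUB_top ?_⟩
      rintro ⟨u | g, _ | _⟩ h1' h2' <;> simp_all [pg_le_iff, PGlt, hE]
    · -- D f
      by_cases h : (f : V × V).2 = v
      · exact ⟨_, isLUB_of_le' (lg_le_lg (pg_le h))⟩
      · refine ⟨⊤, isLUB_top ?_⟩
        rintro ⟨u | g, _ | _⟩ h1' h2' <;> simp_all [pg_le_iff, PGlt, hE]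
  · -- p = C e
    rcases q with ⟨w | f, _ | _⟩
    · -- A w
      by_cases h : (e : V × V).1 = w
      · exact ⟨_, isLUB_of_le' (lg_le_lg (pg_le h))⟩
      · refine ⟨⊤, isLUB_top ?_⟩
        rintro ⟨u | g, _ | _⟩ h1' h2' <;> simp_all [pg_le_iff, PGlt, hE]
    · -- B w
      refine ⟨⊤, isLUB_top ?_⟩
      rintro ⟨u | g, _ | _⟩ h1' h2' <;> simp_all [pg_le_iff, PGlt, hE]
    · -- C f
      by_cases h : e = f
      · subst h; exact ⟨_, isLUB_of_le le_rfl⟩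
      · refine ⟨⊤, isLUB_top ?_⟩
        rintro ⟨u | g, _ | _⟩ h1' h2' <;> simp_all [pg_le_iff, PGlt, hE]
    · -- D f
      by_cases h : f = e
      · exact ⟨_, isLUB_of_le' (lg_le_lg (pg_le h))⟩
      · refine ⟨⊤, isLUB_top ?_⟩
        rintro ⟨u | g, _ | _⟩ h1' h2' <;> simp_all [pg_le_iff, PGlt, hE]
  · -- p = D e
    rcases q with ⟨w | f, _ | _⟩
    · -- A w
      have he := e.2
      by_cases h1 : (e : V × V).1 = w
      · refine ⟨lg (Sum.inr e, false), isLUB_coe (pg_le rfl) (pg_le h1) ?_⟩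
        rintro ⟨u | g, _ | _⟩ h1' h2' <;> simp_all [pg_le_iff, PGlt, hE]
      · by_cases h2 : (e : V × V).2 = w
        · refine ⟨lg (Sum.inl w, true), isLUB_coe (pg_le h2) (pg_le rfl) ?_⟩
          rintro ⟨u | g, _ | _⟩ h1' h2' <;> simp_all [pg_le_iff, PGlt, hE]
        · refine ⟨⊤, isLUB_top ?_⟩
          rintro ⟨u | g, _ | _⟩ h1' h2' <;> simp_all [pg_le_iff, PGlt, hE]
    · -- B w
      by_cases h : (e : V × V).2 = w
      · exact ⟨_, isLUB_of_le (lg_le_lg (pg_le h))⟩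
      · refine ⟨⊤, isLUB_top ?_⟩
        rintro ⟨u | g, _ | _⟩ h1' h2' <;> simp_all [pg_le_iff, PGlt, hE]
    · -- C f
      by_cases h : e = f
      · exact ⟨_, isLUB_of_le (lg_le_lg (pg_le h))⟩
      · refine ⟨⊤, isLUB_top ?_⟩
        rintro ⟨u | g, _ | _⟩ h1' h2' <;> simp_all [pg_le_iff, PGlt, hE]
    · -- D f
      by_cases h : e = f
      · subst h; exact ⟨_, isLUB_of_le le_rfl⟩
      · by_cases h2 : (e : V × V).2 = (f : V × V).2
        · refine ⟨lg (Sum.inl (e : V × V).2, true), isLUB_coe (pg_le rfl) (pg_le h2.symm) ?_⟩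
          rintro ⟨u | g, _ | _⟩ h1' h2' <;> simp_all [pg_le_iff, PGlt, hE]
        · refine ⟨⊤, isLUB_top ?_⟩
          rintro ⟨u | g, _ | _⟩ h1' h2' <;> simp_all [pg_le_iff, PGlt, hE]


lemma exists_isGLB_pg (hE : ∀ v, ¬ E v v) (p q : PGElem E) :
    ∃ z : LGElem E, IsGLB {lg p, lg q} z := by
  rcases p with ⟨v | e, _ | _⟩
  · -- p = A v
    rcases q with ⟨w | f, _ | _⟩
    · -- A w
      by_cases h : v = w
      · subst h; exact ⟨_, isGLB_of_le le_rfl⟩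
      · refine ⟨⊥, isGLB_bot ?_⟩
        rintro ⟨u | g, _ | _⟩ h1' h2' <;> simp_all [pg_le_iff, PGlt, hE]
    · -- B w
      by_cases h : v = w
      · subst h; exact ⟨_, isGLB_of_le (lg_le_lg (pg_le rfl))⟩
      · refine ⟨⊥, isGLB_bot ?_⟩
        rintro ⟨u | g, _ | _⟩ h1' h2' <;> simp_all [pg_le_iff, PGlt, hE]
    · -- C f
      by_cases h : (f : V × V).1 = v
      · exact ⟨_, isGLB_of_le (lg_le_lg (pg_le h))⟩
      · refine ⟨⊥, isGLB_bot ?_⟩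
        rintro ⟨u | g, _ | _⟩ h1' h2' <;> simp_all [pg_le_iff, PGlt, hE]
    · -- D f
      refine ⟨⊥, isGLB_bot ?_⟩
      rintro ⟨u | g, _ | _⟩ h1' h2' <;> simp_all [pg_le_iff, PGlt, hE]
  · -- p = B v
    rcases q with ⟨w | f, _ | _⟩
    · -- A w
      by_cases h : w = v
      · subst h; exact ⟨_, isGLB_of_le' (lg_le_lg (pg_le rfl))⟩
      · refine ⟨⊥, isGLB_bot ?_⟩
        rintro ⟨u | g, _ | _⟩ h1' h2' <;> simp_all [pg_le_iff, PGlt, hE]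
    · -- B w
      by_cases h : v = w
      · subst h; exact ⟨_, isGLB_of_le le_rfl⟩
      · refine ⟨⊥, isGLB_bot ?_⟩
        rintro ⟨u | g, _ | _⟩ h1' h2' <;> simp_all [pg_le_iff, PGlt, hE]
    · -- C f
      have hf := f.2
      by_cases h1 : (f : V × V).2 = v
      · refine ⟨lg (Sum.inr f, true), isGLB_coe (pg_le h1) (pg_le rfl) ?_⟩
        rintro ⟨u | g, _ | _⟩ h1' h2' <;> simp_all [pg_le_iff, PGlt, hE]
      · by_cases h2 : (f : V × V).1 = v
        · refine ⟨lg (Sum.inl v, false), isGLB_coe (pg_le rfl) (pg_le h2) ?_⟩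
          rintro ⟨u | g, _ | _⟩ h1' h2' <;> simp_all [pg_le_iff, PGlt, hE]
        · refine ⟨⊥, isGLB_bot ?_⟩
          rintro ⟨u | g, _ | _⟩ h1' h2' <;> simp_all [pg_le_iff, PGlt, hE]
    · -- D f
      by_cases h : (f : V × V).2 = v
      · exact ⟨_, isGLB_of_le' (lg_le_lg (pg_le h))⟩
      · refine ⟨⊥, isGLB_bot ?_⟩
        rintro ⟨u | g, _ | _⟩ h1' h2' <;> simp_all [pg_le_iff, PGlt, hE]
  · -- p = C e
    rcases q with ⟨w | f, _ | _⟩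
    · -- A w
      by_cases h : (e : V × V).1 = w
      · exact ⟨_, isGLB_of_le' (lg_le_lg (pg_le h))⟩
      · refine ⟨⊥, isGLB_bot ?_⟩
        rintro ⟨u | g, _ | _⟩ h1' h2' <;> simp_all [pg_le_iff, PGlt, hE]
    · -- B w
      have he := e.2
      by_cases h1 : (e : V × V).2 = w
      · refine ⟨lg (Sum.inr e, true), isGLB_coe (pg_le rfl) (pg_le h1) ?_⟩
        rintro ⟨u | g, _ | _⟩ h1' h2' <;> simp_all [pg_le_iff, PGlt, hE]
      · by_cases h2 : (e : V × V).1 = w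
        · refine ⟨lg (Sum.inl w, false), isGLB_coe (pg_le h2) (pg_le rfl) ?_⟩
          rintro ⟨u | g, _ | _⟩ h1' h2' <;> simp_all [pg_le_iff, PGlt, hE]
        · refine ⟨⊥, isGLB_bot ?_⟩
          rintro ⟨u | g, _ | _⟩ h1' h2' <;> simp_all [pg_le_iff, PGlt, hE]
    · -- C f
      by_cases h : e = f
      · subst h; exact ⟨_, isGLB_of_le le_rfl⟩
      · by_cases h2 : (e : V × V).1 = (f : V × V).1
        · refine ⟨lg (Sum.inl (e : V × V).1, false), isGLB_coe (pg_le rfl) (pg_le h2.symm) ?_⟩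
          rintro ⟨u | g, _ | _⟩ h1' h2' <;> simp_all [pg_le_iff, PGlt, hE]
        · refine ⟨⊥, isGLB_bot ?_⟩
          rintro ⟨u | g, _ | _⟩ h1' h2' <;> simp_all [pg_le_iff, PGlt, hE]
    · -- D f
      by_cases h : f = e
      · exact ⟨_, isGLB_of_le' (lg_le_lg (pg_le h))⟩
      · refine ⟨⊥, isGLB_bot ?_⟩
        rintro ⟨u | g, _ | _⟩ h1' h2' <;> simp_all [pg_le_iff, PGlt, hE]
  · -- p = D e
    rcases q with ⟨w | f, _ | _⟩
    · -- A w
      refine ⟨⊥, isGLB_bot ?_⟩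
      rintro ⟨u | g, _ | _⟩ h1' h2' <;> simp_all [pg_le_iff, PGlt, hE]
    · -- B w
      by_cases h : (e : V × V).2 = w
      · exact ⟨_, isGLB_of_le (lg_le_lg (pg_le h))⟩
      · refine ⟨⊥, isGLB_bot ?_⟩
        rintro ⟨u | g, _ | _⟩ h1' h2' <;> simp_all [pg_le_iff, PGlt, hE]
    · -- C f
      by_cases h : e = f
      · exact ⟨_, isGLB_of_le (lg_le_lg (pg_le h))⟩
      · refine ⟨⊥, isGLB_bot ?_⟩
        rintro ⟨u | g, _ | _⟩ h1' h2' <;> simp_all [pg_le_iff, PGlt, hE]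
    · -- D f
      by_cases h : e = f
      · subst h; exact ⟨_, isGLB_of_le le_rfl⟩
      · refine ⟨⊥, isGLB_bot ?_⟩
        rintro ⟨u | g, _ | _⟩ h1' h2' <;> simp_all [pg_le_iff, PGlt, hE]


lemma exists_isLUB_lg (hE : ∀ v, ¬ E v v) (x y : LGElem E) : ∃ z, IsLUB {x, y} z := by
  induction x using WithTop.recTopCoe with
  | top => exact ⟨⊤, isLUB_of_le' le_top⟩
  | coe x =>
    induction y using WithTop.recTopCoe with
    | top => exact ⟨⊤, isLUB_of_le le_top⟩
    | coe y =>
      induction x using WithBot.recBotCoe with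
      | bot => exact ⟨_, isLUB_of_le (WithTop.coe_le_coe.mpr bot_le)⟩
      | coe x =>
        induction y using WithBot.recBotCoe with
        | bot => exact ⟨_, isLUB_of_le' (WithTop.coe_le_coe.mpr bot_le)⟩
        | coe y => exact exists_isLUB_pg hE x y

lemma exists_isGLB_lg (hE : ∀ v, ¬ E v v) (x y : LGElem E) : ∃ z, IsGLB {x, y} z := by
  induction x using WithTop.recTopCoe with
  | top => exact ⟨_, isGLB_of_le' le_top⟩
  | coe x =>
    induction y using WithTop.recTopCoe with
    | top => exact ⟨_, isGLB_of_le le_top⟩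
    | coe y =>
      induction x using WithBot.recBotCoe with
      | bot => exact ⟨_, isGLB_of_le (WithTop.coe_le_coe.mpr bot_le)⟩
      | coe x =>
        induction y using WithBot.recBotCoe with
        | bot => exact ⟨_, isGLB_of_le' (WithTop.coe_le_coe.mpr bot_le)⟩
        | coe y => exact exists_isGLB_pg hE x y

lemma loopless_of_lub (hl : ∀ x y : LGElem E, ∃ z, IsLUB {x, y} z) :
    ∀ v : V, ¬ E v v := by
  intro v hv
  set e : {p : V × V // E p.1 p.2} := ⟨(v, v), hv⟩ with he
  obtain ⟨z, hz⟩ := hl (lg (Sum.inl v, false)) (lg (Sum.inr e, true))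
  have h1 : lg (E := E) (Sum.inl v, false) ≤ z := hz.1 (Set.mem_insert _ _)
  have h2 : lg (E := E) (Sum.inr e, true) ≤ z := hz.1 (Set.mem_insert_of_mem _ rfl)
  have hB : z ≤ lg (Sum.inl v, true) := by
    refine hz.2 ?_
    rintro t (rfl | rfl)
    · exact lg_le_lg (pg_le rfl)
    · exact lg_le_lg (pg_le rfl)
  have hC : z ≤ lg (Sum.inr e, false) := by
    refine hz.2 ?_
    rintro t (rfl | rfl)
    · exact lg_le_lg (pg_le rfl)
    · exact lg_le_lg (pg_le rfl)
  induction z using WithTop.recTopCoe with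
  | top => simp at hB
  | coe z =>
    induction z using WithBot.recBotCoe with
    | bot => simp at h1
    | coe z =>
      have h1' : ((Sum.inl v, false) : PGElem E) ≤ z := by exact_mod_cast h1
      have h2' : ((Sum.inr e, true) : PGElem E) ≤ z := by exact_mod_cast h2
      have hB' : z ≤ ((Sum.inl v, true) : PGElem E) := by exact_mod_cast hB
      have hC' : z ≤ ((Sum.inr e, false) : PGElem E) := by exact_mod_cast hC
      obtain ⟨u | g, _ | _⟩ := z <;> simp_all [pg_le_iff, PGlt, he]

end Core

/-- `L_G` is a lattice (every pair of elements has a least upper bound and a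
greatest lower bound) iff `G` is loopless. -/
theorem lg_lattice_iff_loopless {V : Type*} (E : V → V → Prop) :
    ((∀ x y : LGElem E, ∃ z, IsLUB {x, y} z) ∧
      (∀ x y : LGElem E, ∃ z, IsGLB {x, y} z)) ↔
      ∀ v : V, ¬ E v v := by
  constructor
  · rintro ⟨hlub, -⟩
    exact loopless_of_lub hlub
  · intro hE
    exact ⟨exists_isLUB_lg hE, exists_isGLB_lg hE⟩
end

section
/- For a k-poset (Q, d) and a family (P_t, c_t), t ∈ T, indexed by a well-ordered set T, there is a k-poset homomorphism from the label-matching product ⊗_{t∈T} ((Q, d) ⊔ (P_t, c_t)) to the disjoint union (Q, d) ⊔ (⊗_{t∈T} (P_t, c_t)); consequently these two k-posets are homomorphically equivalent (the reverse homomorphism always exists). This establishes meet-infinite distributivity b ∨ ⋀_t a_t = ⋀_t (b ∨ a_t) in the homomorphism order of countable k-posets. -/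
lemma sum_le_isLeft {α β : Type*} [LE α] [LE β] {x y : α ⊕ β} (h : x ≤ y) :
    x.isLeft = y.isLeft := by
  cases Sum.le_def.mp h with
  | inl _ => rfl
  | inr _ => rfl

lemma getLeft_le_getLeft {α β : Type*} [LE α] [LE β] {x y : α ⊕ β} (h : x ≤ y)
    (hx : x.isLeft) (hy : y.isLeft) : x.getLeft hx ≤ y.getLeft hy := by
  obtain ⟨a, rfl⟩ := Sum.isLeft_iff.mp hx
  obtain ⟨b, rfl⟩ := Sum.isLeft_iff.mp hy
  simp only [Sum.getLeft_inl]
  cases Sum.le_def.mp h with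
  | inl hab => exact hab

lemma getRight_le_getRight {α β : Type*} [LE α] [LE β] {x y : α ⊕ β} (h : x ≤ y)
    (hx : x.isRight) (hy : y.isRight) : x.getRight hx ≤ y.getRight hy := by
  obtain ⟨a, rfl⟩ := Sum.isRight_iff.mp hx
  obtain ⟨b, rfl⟩ := Sum.isRight_iff.mp hy
  simp only [Sum.getRight_inr]
  cases Sum.le_def.mp h with
  | inr hab => exact hab

section Aux

variable {k : ℕ} {T : Type*} [LinearOrder T] [WellFoundedLT T]
  {Q : Type*} [PartialOrder Q] {d : Q → Fin k}
  {P : T → Type*} [∀ t, PartialOrder (P t)] {c : ∀ t, P t → Fin k}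

open Classical in
noncomputable def fwdHom (d : Q → Fin k) (c : ∀ t, P t → Fin k)
    (f : {f : ∀ t, Q ⊕ P t //
          ∀ s t, Sum.elim d (c s) (f s) = Sum.elim d (c t) (f t)}) :
    Q ⊕ {g : ∀ t, P t // ∀ s t, c s (g s) = c t (g t)} :=
  if h : ∃ t, (f.1 t).isLeft then
    Sum.inl ((f.1 (wellFounded_lt.min {t | (f.1 t).isLeft} h)).getLeft
      (wellFounded_lt.min_mem {t | (f.1 t).isLeft} h))
  else
    Sum.inr ⟨fun t => (f.1 t).getRight (Sum.not_isLeft.mp (not_exists.mp h t)),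
      by
        intro s t
        have hs := Sum.not_isLeft.mp (not_exists.mp h s)
        have ht := Sum.not_isLeft.mp (not_exists.mp h t)
        have := f.2 s t
        obtain ⟨ps, hps⟩ := Sum.isRight_iff.mp hs
        obtain ⟨pt, hpt⟩ := Sum.isRight_iff.mp ht
        simp only [hps, hpt, Sum.elim_inr, Sum.getRight_inr] at this ⊢
        exact this⟩

end Aux

/-- Meet-infinite distributivity: for a `k`-poset `(Q,d)` and a family
`(P_t, c_t)` indexed by a (nonempty) well-ordered set `T`, there is a `k`-poset
homomorphism from the label-matching product `⊗_{t} ((Q,d) ⊔ (P_t,c_t))` to the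
disjoint union `(Q,d) ⊔ (⊗_t (P_t,c_t))`; together with the always-existing
reverse homomorphism, the two `k`-posets are homomorphically equivalent. -/
theorem meet_infinite_distributivity {k : ℕ} {T : Type*} [LinearOrder T]
    [WellFoundedLT T] [Nonempty T] {Q : Type*} [PartialOrder Q] (d : Q → Fin k)
    (P : T → Type*) [∀ t, PartialOrder (P t)] (c : ∀ t, P t → Fin k) :
    (∃ h : {f : ∀ t, Q ⊕ P t //
          ∀ s t, Sum.elim d (c s) (f s) = Sum.elim d (c t) (f t)} →
        Q ⊕ {g : ∀ t, P t // ∀ s t, c s (g s) = c t (g t)},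
      IsKPosetHom
        (fun f => Sum.elim d (c (Classical.arbitrary T)) (f.1 (Classical.arbitrary T)))
        (Sum.elim d (fun g => c (Classical.arbitrary T) (g.1 (Classical.arbitrary T))))
        h) ∧
    (∃ h : Q ⊕ {g : ∀ t, P t // ∀ s t, c s (g s) = c t (g t)} →
        {f : ∀ t, Q ⊕ P t //
          ∀ s t, Sum.elim d (c s) (f s) = Sum.elim d (c t) (f t)},
      IsKPosetHom
        (Sum.elim d (fun g => c (Classical.arbitrary T) (g.1 (Classical.arbitrary T))))
        (fun f => Sum.elim d (c (Classical.arbitrary T)) (f.1 (Classical.arbitrary T)))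
        h) := by
  constructor
  · refine ⟨fwdHom d c, ?_, ?_⟩
    · -- monotone
      intro f f' hff
      have hpt : ∀ t, f.1 t ≤ f'.1 t := fun t => hff t
      have hside : ∀ t, (f.1 t).isLeft = (f'.1 t).isLeft :=
        fun t => sum_le_isLeft (hpt t)
      unfold fwdHom
      have hex : (∃ t, (f.1 t).isLeft) ↔ (∃ t, (f'.1 t).isLeft) := by
        simp only [hside]
      by_cases h : ∃ t, (f.1 t).isLeft
      · have h' : ∃ t, (f'.1 t).isLeft := hex.mp h
        rw [dif_pos h, dif_pos h']
        have hmin : wellFounded_lt.min {t | (f.1 t).isLeft} h =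
            wellFounded_lt.min {t | (f'.1 t).isLeft} h' := by
          congr 1
          ext t
          simp [Set.mem_setOf_eq, hside t]
        have hmem := wellFounded_lt.min_mem {t | (f.1 t).isLeft} h
        have hmem' := wellFounded_lt.min_mem {t | (f'.1 t).isLeft} h'
        obtain ⟨q, hq⟩ := Sum.isLeft_iff.mp hmem
        have hmem2 : (f'.1 (wellFounded_lt.min {t | (f.1 t).isLeft} h)).isLeft := by
          rw [← hside]; exact hmem
        obtain ⟨q', hq'⟩ := Sum.isLeft_iff.mp hmem2
        have hle := hpt (wellFounded_lt.min {t | (f.1 t).isLeft} h)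
        rw [hq, hq'] at hle
        have hqq : q ≤ q' := by
          cases Sum.le_def.mp hle with
          | inl hab => exact hab
        have g1 : (f.1 (wellFounded_lt.min {t | (f.1 t).isLeft} h)).getLeft
            (wellFounded_lt.min_mem {t | (f.1 t).isLeft} h) = q :=
          (Sum.getLeft_eq_iff _).mpr hq
        have e2 : f'.1 (wellFounded_lt.min {t | (f'.1 t).isLeft} h') = Sum.inl q' :=
          hmin ▸ hq'
        have g2 : (f'.1 (wellFounded_lt.min {t | (f'.1 t).isLeft} h')).getLeft
            (wellFounded_lt.min_mem {t | (f'.1 t).isLeft} h') = q' :=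
          (Sum.getLeft_eq_iff _).mpr e2
        rw [g1, g2]
        exact Sum.LiftRel.inl hqq
      · have h' : ¬ ∃ t, (f'.1 t).isLeft := fun hh => h (hex.mpr hh)
        rw [dif_neg h, dif_neg h']
        refine Sum.LiftRel.inr ?_
        intro t
        exact getRight_le_getRight (hpt t) _ _
    · -- labels
      intro f
      unfold fwdHom
      by_cases h : ∃ t, (f.1 t).isLeft
      · rw [dif_pos h]
        have hmem := wellFounded_lt.min_mem {t | (f.1 t).isLeft} h
        set t0 := wellFounded_lt.min {t | (f.1 t).isLeft} h with ht0
        obtain ⟨q, hq⟩ := Sum.isLeft_iff.mp hmem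
        have hlab := f.2 t0 (Classical.arbitrary T)
        have hget : (f.1 t0).getLeft hmem = q := (Sum.getLeft_eq_iff _).mpr hq
        simp only [Sum.elim_inl, hget]
        rw [← hlab]
        show d ((f.1 t0).getLeft hmem) = _
        rw [hget, hq]
        simp
      · rw [dif_neg h]
        obtain ⟨p, hp⟩ := Sum.isRight_iff.mp
          (Sum.not_isLeft.mp (not_exists.mp h (Classical.arbitrary T)))
        simp only [Sum.elim_inr]
        have : (f.1 (Classical.arbitrary T)).getRight
            (Sum.not_isLeft.mp (not_exists.mp h (Classical.arbitrary T))) = p :=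
          (Sum.getRight_eq_iff _).mpr hp
        rw [this, hp]
        simp
  · -- reverse
    refine ⟨fun x => Sum.elim
        (fun q => ⟨fun _ => Sum.inl q, fun _ _ => rfl⟩)
        (fun g => ⟨fun t => Sum.inr (g.1 t), fun s t => g.2 s t⟩) x, ?_, ?_⟩
    · intro x y hxy
      cases Sum.le_def.mp hxy with
      | inl hq => intro t; exact Sum.LiftRel.inl hq
      | inr hg => intro t; exact Sum.LiftRel.inr (hg t)
    · rintro (q | g) <;> simp
end

section
/- A nonempty finite k-poset core (P, c) is join-irreducible in the homomorphism order of finite k-posets if and only if it is connected. Precisely: if a connected core (P, c) is homomorphically equivalent to the disjoint union (Q_1, d_1) ⊔ (Q_2, d_2), then (P, c) is homomorphically equivalent to (Q_1, d_1) or to (Q_2, d_2); and if a core has more than one connected component, it is the disjoint union of proper k-subposets, hence not join-irreducible. -/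
/-- A subset `S` of a poset is fence-connected if any two of its elements are
joined by a finite sequence inside `S` whose consecutive members are comparable. -/
def FenceConnectedIn {Q : Type*} [PartialOrder Q] (S : Set Q) : Prop :=
  ∀ a ∈ S, ∀ b ∈ S, ∃ (n : ℕ) (p : Fin (n + 1) → Q),
    (∀ i, p i ∈ S) ∧ p 0 = a ∧ p (Fin.last n) = b ∧
    ∀ i : Fin n, p i.castSucc ≤ p i.succ ∨ p i.succ ≤ p i.castSucc

universe u

/-- A nonempty finite `k`-poset core is join-irreducible in the homomorphism
order iff it is connected: if it is connected and homomorphically equivalent to a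
disjoint union `(Q₁,d₁) ⊔ (Q₂,d₂)`, then it is homomorphically equivalent to one
of the summands; and if it is not connected, then it splits as the disjoint union
of two proper (nonempty, mutually incomparable) `k`-subposets. -/
theorem core_join_irreducible_iff_connected {k : ℕ} {P : Type*} [PartialOrder P]
    [Fintype P] [Nonempty P] (c : P → Fin k)
    (hcore : ∀ f : P → P, IsKPosetHom c c f → Function.Surjective f) :
    (FenceConnectedIn (Set.univ : Set P) →
      ∀ (Q₁ Q₂ : Type u) [PartialOrder Q₁] [PartialOrder Q₂] [Fintype Q₁] [Fintype Q₂]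
        (d₁ : Q₁ → Fin k) (d₂ : Q₂ → Fin k),
        (∃ f : P → Q₁ ⊕ Q₂, IsKPosetHom c (Sum.elim d₁ d₂) f) →
        (∃ g : Q₁ ⊕ Q₂ → P, IsKPosetHom (Sum.elim d₁ d₂) c g) →
        ((∃ f : P → Q₁, IsKPosetHom c d₁ f) ∧ (∃ g : Q₁ → P, IsKPosetHom d₁ c g)) ∨
        ((∃ f : P → Q₂, IsKPosetHom c d₂ f) ∧ (∃ g : Q₂ → P, IsKPosetHom d₂ c g))) ∧
    (¬ FenceConnectedIn (Set.univ : Set P) →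
      ∃ S₁ S₂ : Set P, S₁.Nonempty ∧ S₂.Nonempty ∧ S₁ ∪ S₂ = Set.univ ∧
        Disjoint S₁ S₂ ∧ ∀ x ∈ S₁, ∀ y ∈ S₂, ¬(x ≤ y ∨ y ≤ x)) := by
  constructor
  · intro hconn Q₁ Q₂ _ _ _ _ d₁ d₂ hf hg
    obtain ⟨f, hfm, hfl⟩ := hf
    obtain ⟨g, hgm, hgl⟩ := hg
    obtain ⟨x₀⟩ := ‹Nonempty P›
    have key : ∀ x : P, (f x).isLeft = (f x₀).isLeft := by
      intro x
      obtain ⟨n, p, -, hp0, hpl, hcmp⟩ := hconn x₀ trivial x trivial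
      have step : ∀ i : Fin (n + 1), (f (p i)).isLeft = (f (p 0)).isLeft := by
        intro i
        induction i using Fin.induction with
        | zero => rfl
        | succ j ih =>
          have hrel : (f (p j.succ)).isLeft = (f (p j.castSucc)).isLeft := by
            rcases hcmp j with h | h
            · have h2 := hfm h
              cases hx : f (p j.castSucc) with
              | inl a =>
                cases hy : f (p j.succ) with
                | inl b => rfl
                | inr b => rw [hx, hy] at h2; exact absurd h2 Sum.not_inl_le_inr
              | inr a =>
                cases hy : f (p j.succ) with
                | inl b => rw [hx, hy] at h2; exact absurd h2 Sum.not_inr_le_inl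
                | inr b => rfl
            · have h2 := hfm h
              cases hx : f (p j.castSucc) with
              | inl a =>
                cases hy : f (p j.succ) with
                | inl b => rfl
                | inr b => rw [hx, hy] at h2; exact absurd h2 Sum.not_inr_le_inl
              | inr a =>
                cases hy : f (p j.succ) with
                | inl b => rw [hx, hy] at h2; exact absurd h2 Sum.not_inl_le_inr
                | inr b => rfl
          rw [hrel, ih]
      have := step (Fin.last n)
      rw [hpl, hp0] at this
      exact this
    cases hfx0 : f x₀ with
    | inl a₀ =>
      left
      constructor
      · have hex : ∀ x : P, ∃ a : Q₁, f x = Sum.inl a := by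
          intro x
          have := key x
          rw [hfx0] at this
          cases hx : f x with
          | inl a => exact ⟨a, rfl⟩
          | inr a => rw [hx] at this; simp at this
        refine ⟨fun x => (hex x).choose, ?_, ?_⟩
        · intro x y hxy
          have h2 := hfm hxy
          rw [(hex x).choose_spec, (hex y).choose_spec] at h2
          exact Sum.inl_le_inl_iff.mp h2
        · intro x
          have := hfl x
          rw [(hex x).choose_spec] at this
          exact this
      · exact ⟨fun a => g (Sum.inl a),
          fun a b hab => hgm (Sum.inl_le_inl_iff.mpr hab),
          fun a => hgl (Sum.inl a)⟩
    | inr a₀ =>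
      right
      constructor
      · have hex : ∀ x : P, ∃ a : Q₂, f x = Sum.inr a := by
          intro x
          have := key x
          rw [hfx0] at this
          cases hx : f x with
          | inl a => rw [hx] at this; simp at this
          | inr a => exact ⟨a, rfl⟩
        refine ⟨fun x => (hex x).choose, ?_, ?_⟩
        · intro x y hxy
          have h2 := hfm hxy
          rw [(hex x).choose_spec, (hex y).choose_spec] at h2
          exact Sum.inr_le_inr_iff.mp h2
        · intro x
          have := hfl x
          rw [(hex x).choose_spec] at this
          exact this
      · exact ⟨fun a => g (Sum.inr a),
          fun a b hab => hgm (Sum.inr_le_inr_iff.mpr hab),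
          fun a => hgl (Sum.inr a)⟩
  · intro hnc
    rw [FenceConnectedIn] at hnc
    push_neg at hnc
    obtain ⟨a, -, b, -, hab⟩ := hnc
    set S₁ : Set P := {x | ∃ (n : ℕ) (p : Fin (n + 1) → P),
      p 0 = a ∧ p (Fin.last n) = x ∧
      ∀ i : Fin n, p i.castSucc ≤ p i.succ ∨ p i.succ ≤ p i.castSucc} with hS₁
    have haS₁ : a ∈ S₁ := ⟨0, fun _ => a, rfl, rfl, fun i => i.elim0⟩
    have hbS₁ : b ∉ S₁ := by
      rintro ⟨n, p, hp0, hpl, hcmp⟩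
      obtain ⟨i, h1, h2⟩ := hab n p (fun _ => trivial) hp0 hpl
      rcases hcmp i with h | h
      · exact h1 h
      · exact h2 h
    have hclosed : ∀ x ∈ S₁, ∀ y : P, (x ≤ y ∨ y ≤ x) → y ∈ S₁ := by
      rintro x ⟨n, p, hp0, hpl, hcmp⟩ y hxy
      refine ⟨n + 1, Fin.snoc p y, ?_, ?_, ?_⟩
      · rw [show (0 : Fin (n + 2)) = Fin.castSucc 0 by rfl, Fin.snoc_castSucc]
        exact hp0
      · simp
      · intro i
        induction i using Fin.lastCases with
        | last =>
          rw [Fin.snoc_castSucc, Fin.succ_last, Fin.snoc_last, hpl]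
          exact hxy
        | cast j =>
          rw [Fin.snoc_castSucc, Fin.succ_castSucc, Fin.snoc_castSucc]
          exact hcmp j
    refine ⟨S₁, S₁ᶜ, ⟨a, haS₁⟩, ⟨b, hbS₁⟩, Set.union_compl_self S₁,
      disjoint_compl_right, ?_⟩
    intro x hx y hy hxy
    exact hy (hclosed x hx y hxy)
end

section
/- In the homomorphism order on homomorphic-equivalence classes of countable k-posets (with join the disjoint union and meet the label-matching product), every connected finite k-poset core a is a compact element: if a ≤ ⋁X for a countable set X of classes, then a ≤ x_0 for some x_0 ∈ X. -/
private lemma sigma_le_fst {ι : Type*} {P : ι → Type*} [∀ i, PartialOrder (P i)]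
    {s t : Σ i, P i} (h : s ≤ t) : s.1 = t.1 := (Sigma.le_def.mp h).1

private lemma sigma_proj_le {ι : Type*} {P : ι → Type*} [∀ i, PartialOrder (P i)]
    {i : ι} {s t : Σ j, P j} (hs : s.1 = i) (ht : t.1 = i) (h : s ≤ t) :
    (hs ▸ s.2 : P i) ≤ ht ▸ t.2 := by
  obtain ⟨j, a⟩ := s
  obtain ⟨j', b⟩ := t
  obtain ⟨he, hle⟩ := Sigma.le_def.mp h
  cases he
  cases hs
  cases ht
  exact hle

private lemma sigma_proj_label {k : ℕ} {ι : Type*} {P : ι → Type*}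
    [∀ i, PartialOrder (P i)] {c : ∀ i, P i → Fin k} {i : ι} {s : Σ j, P j}
    (hs : s.1 = i) : c i (hs ▸ s.2) = c s.1 s.2 := by
  obtain ⟨j, a⟩ := s
  cases hs
  rfl

/-- In the homomorphism order of countable `k`-posets, every connected finite
`k`-poset core is compact: if it maps homomorphically into the disjoint union
(the countable join) of a countable family of countable `k`-posets, then it maps
homomorphically into one member of the family. -/
theorem connected_core_compact {k : ℕ} {A : Type*} [PartialOrder A] [Fintype A]
    [Nonempty A] (cA : A → Fin k)
    (hconn : FenceConnectedIn (Set.univ : Set A))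
    (hcore : ∀ f : A → A, IsKPosetHom cA cA f → Function.Surjective f)
    {ι : Type*} [Countable ι] (P : ι → Type*) [∀ i, PartialOrder (P i)]
    [∀ i, Countable (P i)] (c : ∀ i, P i → Fin k)
    (h : ∃ f : A → Σ i, P i, IsKPosetHom cA (fun s => c s.1 s.2) f) :
    ∃ i, ∃ f : A → P i, IsKPosetHom cA (c i) f := by
  obtain ⟨f, hmono, hlab⟩ := h
  obtain ⟨a₀⟩ := ‹Nonempty A›
  have key : ∀ x : A, (f x).1 = (f a₀).1 := by
    intro x
    obtain ⟨n, p, -, hp0, hpl, hcomp⟩ := hconn x (Set.mem_univ x) a₀ (Set.mem_univ a₀)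
    have step : ∀ j : Fin (n + 1), (f (p j)).1 = (f (p 0)).1 := by
      intro j
      induction j using Fin.induction with
      | zero => rfl
      | succ j ih =>
        rcases hcomp j with hle | hle
        · rw [← sigma_le_fst (hmono hle), ih]
        · rw [sigma_le_fst (hmono hle), ih]
    have := step (Fin.last n)
    rw [hp0, hpl] at this
    exact this.symm
  refine ⟨(f a₀).1, fun x => (key x) ▸ (f x).2, ?_, ?_⟩
  · intro x y hxy
    exact sigma_proj_le (key x) (key y) (hmono hxy)
  · intro x
    show c (f a₀).1 ((key x) ▸ (f x).2) = cA x
    rw [sigma_proj_label (c := c) (key x)]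
    exact hlab x
end

section
/- Every 2-lattice (a finite lattice with a labeling into {0,1}) is homomorphically equivalent to its longest alternating chain; consequently a 2-lattice (L, c) is homomorphic to a 2-lattice (L', c') if and only if Alt(L, c) < Alt(L', c'), or Alt(L, c) = Alt(L', c') and the least elements of L and L' have the same label. -/
/-- An alternating `k`-chain of cardinality `n` in the `k`-poset `(P, c)`. -/
def IsAltChain {k n : ℕ} {P : Type*} [PartialOrder P] (c : P → Fin k)
    (a : Fin n → P) : Prop :=
  StrictMono a ∧ ∀ (i : ℕ) (h : i + 1 < n),
    c (a ⟨i, Nat.lt_of_succ_lt h⟩) ≠ c (a ⟨i + 1, h⟩)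

/-- The alternation number of a finite `k`-poset. -/
noncomputable def altNum {k : ℕ} {P : Type*} [PartialOrder P] [Fintype P]
    (c : P → Fin k) : ℕ :=
  sSup {n | ∃ a : Fin n → P, IsAltChain c a}

open Fin.NatCast

lemma fin2_succ_of_ne : ∀ u v : Fin 2, u ≠ v → v = u + 1 := by decide

section Chains
variable {P : Type*} [PartialOrder P] (c : P → Fin 2)

lemma altChain_single (x : P) : IsAltChain c (fun _ : Fin 1 => x) :=
  ⟨fun i j hij => absurd (Subsingleton.elim i j) (ne_of_lt hij),
   fun _ hi => absurd hi (by omega)⟩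

lemma altChain_label {n : ℕ} {a : Fin n → P} (h : IsAltChain c a) (hn : 0 < n) :
    ∀ m (hm : m < n), c (a ⟨m, hm⟩) = c (a ⟨0, hn⟩) + (m : Fin 2) := by
  intro m
  induction m with
  | zero => intro hm; simp
  | succ k ih =>
    intro hm
    have hk : k < n := by omega
    have h2 : c (a ⟨k+1, hm⟩) = c (a ⟨k, hk⟩) + 1 := fin2_succ_of_ne _ _ (h.2 k hm)
    rw [h2, ih hk]
    push_cast
    abel

lemma altChain_snoc {n : ℕ} {a : Fin n → P} (h : IsAltChain c a) (hn : 0 < n) {y : P}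
    (hlt : a ⟨n-1, Nat.sub_lt hn one_pos⟩ < y)
    (hc : c (a ⟨n-1, Nat.sub_lt hn one_pos⟩) ≠ c y) :
    ∃ b : Fin (n+1) → P, IsAltChain c b ∧ b ⟨n, Nat.lt_succ_self n⟩ = y := by
  refine ⟨fun k => if hk : (k : ℕ) < n then a ⟨k, hk⟩ else y, ⟨?_, ?_⟩, ?_⟩
  · intro i j hij
    have hv : (i:ℕ) < (j:ℕ) := hij
    have hj1 : (j:ℕ) < n + 1 := j.isLt
    dsimp only
    rcases lt_or_ge ((j:ℕ)) n with hj | hj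
    · rw [dif_pos (show (i:ℕ) < n by omega), dif_pos hj]
      exact h.1 (Fin.mk_lt_mk.mpr hv)
    · rw [dif_pos (show (i:ℕ) < n by omega), dif_neg (by omega)]
      have h1 : a ⟨(i:ℕ), by omega⟩ ≤ a ⟨n-1, Nat.sub_lt hn one_pos⟩ :=
        h.1.monotone (Fin.mk_le_mk.mpr (by omega))
      exact lt_of_le_of_lt h1 hlt
  · intro i hi
    dsimp only
    by_cases h2 : i + 1 < n
    · rw [dif_pos (show i < n by omega), dif_pos h2]
      exact h.2 i h2
    · have hi1 : i < n := by omega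
      rw [dif_pos hi1, dif_neg (by omega)]
      have he : i = n - 1 := by omega
      subst he
      exact hc
  · exact dif_neg (lt_irrefl n)

lemma altChain_update {n : ℕ} {a : Fin n → P} (h : IsAltChain c a) (hn : 0 < n) {y : P}
    (hlt : a ⟨n-1, Nat.sub_lt hn one_pos⟩ < y)
    (hc : c (a ⟨n-1, Nat.sub_lt hn one_pos⟩) = c y) :
    ∃ b : Fin n → P, IsAltChain c b ∧ b ⟨n-1, Nat.sub_lt hn one_pos⟩ = y := by
  have hlab : ∀ k : Fin n, c (if (k:ℕ) < n - 1 then a k else y) = c (a k) := by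
    intro k
    by_cases hk : (k:ℕ) < n - 1
    · rw [if_pos hk]
    · rw [if_neg hk]
      have hke : k = ⟨n-1, Nat.sub_lt hn one_pos⟩ := Fin.ext (by have := k.isLt; simp; omega)
      rw [hke, ← hc]
  refine ⟨fun k => if (k:ℕ) < n - 1 then a k else y, ⟨?_, ?_⟩, ?_⟩
  · intro i j hij
    have hv : (i:ℕ) < (j:ℕ) := hij
    have hj1 : (j:ℕ) < n := j.isLt
    dsimp only
    by_cases hj : (j:ℕ) < n - 1
    · rw [if_pos (by omega), if_pos hj]
      exact h.1 hij
    · rw [if_neg hj]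
      by_cases hi : (i:ℕ) < n - 1
      · rw [if_pos hi]
        have h1 : a i < a ⟨n-1, Nat.sub_lt hn one_pos⟩ := h.1 (Fin.lt_def.mpr (by simpa using hi))
        exact lt_trans h1 hlt
      · exact absurd hv (by omega)
  · intro i hi
    dsimp only
    have e1 := hlab ⟨i, by omega⟩
    have e2 := hlab ⟨i+1, hi⟩
    rw [e1, e2]
    exact h.2 i hi
  · dsimp only
    rw [if_neg (by simp)]
lemma altChain_cons_bot [OrderBot P] {n : ℕ} {a : Fin n → P} (h : IsAltChain c a) (hn : 0 < n)
    (hc : c (a ⟨0, hn⟩) ≠ c ⊥) :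
    ∃ b : Fin (n+1) → P, IsAltChain c b ∧
      b ⟨n, Nat.lt_succ_self n⟩ = a ⟨n-1, Nat.sub_lt hn one_pos⟩ := by
  refine ⟨fun k => if hk : (k : ℕ) = 0 then ⊥
      else a ⟨(k:ℕ)-1, by have := k.isLt; omega⟩, ⟨?_, ?_⟩, ?_⟩
  · intro i j hij
    have hv : (i:ℕ) < (j:ℕ) := hij
    have hj1 : (j:ℕ) < n + 1 := j.isLt
    dsimp only
    by_cases hi : (i:ℕ) = 0
    · rw [dif_pos hi, dif_neg (by omega)]
      have hle : a ⟨0, hn⟩ ≤ a ⟨(j:ℕ)-1, by omega⟩ :=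
        h.1.monotone (Fin.mk_le_mk.mpr (by omega))
      refine lt_of_le_of_ne bot_le ?_
      intro heq
      apply hc
      have hb : a ⟨0, hn⟩ = ⊥ := le_bot_iff.mp (hle.trans heq.symm.le)
      rw [hb]
    · rw [dif_neg hi, dif_neg (by omega)]
      exact h.1 (Fin.mk_lt_mk.mpr (by omega))
  · intro i hi
    dsimp only
    by_cases h0 : i = 0
    · subst h0
      rw [dif_pos rfl, dif_neg (by omega)]
      exact Ne.symm hc
    · rw [dif_neg h0, dif_neg (by omega)]
      have h3 : (i-1)+1 < n := by omega
      have h4 := h.2 (i-1) h3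
      have e3 : a ⟨(i-1)+1, h3⟩ = a ⟨(i+1)-1, by omega⟩ := congrArg a (Fin.ext (by simp; omega))
      rw [e3] at h4
      exact h4
  · dsimp only
    rw [dif_neg (by omega)]

end Chains

section Sup
variable {P : Type*} [PartialOrder P] [Fintype P] (c : P → Fin 2)

lemma altSet_bddAbove : BddAbove {n | ∃ a : Fin n → P, IsAltChain c a} := by
  refine ⟨Fintype.card P, fun n hn => ?_⟩
  obtain ⟨a, ha⟩ := hn
  simpa using Fintype.card_le_of_injective a ha.1.injective

lemma altNum_mem : altNum c ∈ {n | ∃ a : Fin n → P, IsAltChain c a} := by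
  apply Nat.sSup_mem _ (altSet_bddAbove c)
  exact ⟨0, Fin.elim0, fun i => i.elim0, fun i hi => absurd hi (by omega)⟩

def endSet (x : P) : Set ℕ :=
  {n | ∃ a : Fin n → P, IsAltChain c a ∧ ∃ hn : 0 < n, a ⟨n-1, Nat.sub_lt hn one_pos⟩ = x}

noncomputable def hEnd (x : P) : ℕ := sSup (endSet c x)

lemma one_mem_endSet (x : P) : 1 ∈ endSet c x :=
  ⟨fun _ => x, altChain_single c x, one_pos, rfl⟩

lemma endSet_bddAbove (x : P) : BddAbove (endSet c x) := by
  refine ⟨Fintype.card P, fun n hn => ?_⟩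
  obtain ⟨a, ha, -⟩ := hn
  simpa using Fintype.card_le_of_injective a ha.1.injective

lemma hEnd_mem (x : P) : hEnd c x ∈ endSet c x :=
  Nat.sSup_mem ⟨1, one_mem_endSet c x⟩ (endSet_bddAbove c x)

lemma le_hEnd {n : ℕ} {x : P} (h : n ∈ endSet c x) : n ≤ hEnd c x :=
  le_csSup (endSet_bddAbove c x) h

lemma one_le_hEnd (x : P) : 1 ≤ hEnd c x := le_hEnd c (one_mem_endSet c x)

lemma hEnd_le_altNum (x : P) : hEnd c x ≤ altNum c := by
  obtain ⟨a, ha, -⟩ := hEnd_mem c x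
  exact le_csSup (altSet_bddAbove c) ⟨a, ha⟩

lemma hEnd_mono : Monotone (hEnd c) := by
  intro x y hxy
  rcases eq_or_lt_of_le hxy with rfl | hlt
  · exact le_refl _
  obtain ⟨a, ha, hn, hend⟩ := hEnd_mem c x
  by_cases hcc : c x = c y
  · obtain ⟨b, hb, hbe⟩ := altChain_update c ha hn (by rw [hend]; exact hlt)
      (by rw [hend]; exact hcc)
    exact le_hEnd c ⟨b, hb, hn, hbe⟩
  · obtain ⟨b, hb, hbe⟩ := altChain_snoc c ha hn (by rw [hend]; exact hlt)
      (by rw [hend]; exact hcc)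
    have h1 : hEnd c x + 1 ∈ endSet c y := ⟨b, hb, by omega, hbe⟩
    have := le_hEnd c h1
    omega

lemma one_le_altNum [OrderBot P] : 1 ≤ altNum c :=
  le_csSup (altSet_bddAbove c) ⟨fun _ => (⊥ : P), altChain_single c ⊥⟩

lemma max_first_label [OrderBot P] {n : ℕ} {a : Fin n → P} (ha : IsAltChain c a) (hn : 0 < n)
    (hmax : altNum c ≤ n) : c (a ⟨0, hn⟩) = c ⊥ := by
  by_contra h0
  obtain ⟨b, hb, -⟩ := altChain_cons_bot c ha hn h0
  have : n + 1 ≤ altNum c := le_csSup (altSet_bddAbove c) ⟨b, hb⟩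
  omega

lemma hEnd_label [OrderBot P] (x : P) :
    c x = c ⊥ + ((hEnd c x - 1 : ℕ) : Fin 2) := by
  obtain ⟨a, ha, hn, hend⟩ := hEnd_mem c x
  have h0 : c (a ⟨0, hn⟩) = c ⊥ := by
    by_contra h0
    obtain ⟨b, hb, hbe⟩ := altChain_cons_bot c ha hn h0
    rw [hend] at hbe
    have h1 : hEnd c x + 1 ∈ endSet c x := ⟨b, hb, by omega, hbe⟩
    have := le_hEnd c h1
    omega
  have h2 := altChain_label c ha hn (hEnd c x - 1) (Nat.sub_lt hn one_pos)
  rw [hend, h0] at h2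
  exact h2

lemma exists_max_chain [OrderBot P] :
    ∃ a : Fin (altNum c) → P, IsAltChain c a ∧
      ∀ i : Fin (altNum c), c (a i) = c ⊥ + ((i : ℕ) : Fin 2) := by
  obtain ⟨a, ha⟩ := altNum_mem c
  have hn : 0 < altNum c := one_le_altNum c
  refine ⟨a, ha, fun i => ?_⟩
  obtain ⟨iv, hiv⟩ := i
  have h2 := altChain_label c ha hn iv hiv
  rw [max_first_label c ha hn le_rfl] at h2
  exact h2

end Sup

lemma hom_altChain {L L' : Type*} [PartialOrder L] [PartialOrder L']
    {c : L → Fin 2} {c' : L' → Fin 2}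
    {f : L → L'} (hf : IsKPosetHom c c' f) {n : ℕ} {a : Fin n → L} (h : IsAltChain c a) :
    IsAltChain c' (f ∘ a) := by
  constructor
  · intro i j hij
    have hv : (i:ℕ) < (j:ℕ) := hij
    refine lt_of_le_of_ne (hf.1 (h.1.monotone hij.le)) ?_
    intro heq
    have h1 : (i:ℕ) + 1 < n := by have := j.isLt; omega
    have hle1 : f (a i) ≤ f (a ⟨(i:ℕ)+1, h1⟩) :=
      hf.1 (h.1.monotone (Fin.le_def.mpr (by simp)))
    have hle2 : f (a ⟨(i:ℕ)+1, h1⟩) ≤ f (a j) :=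
      hf.1 (h.1.monotone (Fin.le_def.mpr (by simp; omega)))
    have heq2 : f (a i) = f (a ⟨(i:ℕ)+1, h1⟩) :=
      le_antisymm hle1 (hle2.trans heq.symm.le)
    have h3 := congrArg c' heq2
    rw [hf.2, hf.2] at h3
    exact h.2 i.val h1 h3
  · intro i hi
    have h2 := h.2 i hi
    simp only [Function.comp_apply]
    rw [hf.2, hf.2]
    exact h2


set_option maxHeartbeats 1000000

/-- Every finite `2`-lattice is homomorphically equivalent to its longest
alternating chain; consequently a `2`-lattice `(L,c)` is homomorphic to a
`2`-lattice `(L',c')` iff `Alt(L,c) < Alt(L',c')`, or `Alt(L,c) = Alt(L',c')`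
and the least elements have the same label. -/
theorem two_lattice_hom_iff {L L' : Type*} [Lattice L] [Lattice L']
    [Fintype L] [Fintype L'] [OrderBot L] [OrderBot L']
    (c : L → Fin 2) (c' : L' → Fin 2) :
    (∃ a : Fin (altNum c) → L, IsAltChain c a ∧
      (∃ f : L → Set.range a, IsKPosetHom c (fun x : Set.range a => c x) f) ∧
      (∃ g : Set.range a → L, IsKPosetHom (fun x : Set.range a => c x) c g)) ∧
    ((∃ f : L → L', IsKPosetHom c c' f) ↔
      altNum c < altNum c' ∨ (altNum c = altNum c' ∧ c ⊥ = c' ⊥)) := by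
  classical
  obtain ⟨a, ha, hlab⟩ := exists_max_chain c
  have hN : 1 ≤ altNum c := one_le_altNum c
  constructor
  · refine ⟨a, ha, ⟨fun x => ⟨a ⟨hEnd c x - 1,
        by have h1 := one_le_hEnd c x; have h2 := hEnd_le_altNum c x; omega⟩,
        Set.mem_range_self _⟩, ?_, ?_⟩,
      ⟨Subtype.val, fun _ _ h => h, fun _ => rfl⟩⟩
    · intro x y hxy
      have h1 := hEnd_mono c hxy
      have h2 := one_le_hEnd c x
      exact Subtype.mk_le_mk.mpr (ha.1.monotone (Fin.mk_le_mk.mpr (by omega)))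
    · intro x
      show c (a ⟨hEnd c x - 1, _⟩) = c x
      rw [hlab]
      rw [hEnd_label c x]
  · constructor
    · rintro ⟨f, hf⟩
      have hle : altNum c ≤ altNum c' := by
        have hne : {n | ∃ a : Fin n → L, IsAltChain c a}.Nonempty :=
          ⟨0, Fin.elim0, fun i => i.elim0, fun i hi => absurd hi (by omega)⟩
        apply csSup_le hne
        intro n hn
        obtain ⟨b, hb⟩ := hn
        exact le_csSup (altSet_bddAbove c') ⟨f ∘ b, hom_altChain hf hb⟩
      rcases lt_or_eq_of_le hle with hlt | heq
      · exact Or.inl hlt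
      · refine Or.inr ⟨heq, ?_⟩
        have hfa : IsAltChain c' (f ∘ a) := hom_altChain hf ha
        have h0' : c' ((f ∘ a) ⟨0, hN⟩) = c' ⊥ :=
          max_first_label c' hfa hN (by omega)
        have h0 : c (a ⟨0, hN⟩) = c ⊥ := by
          have := hlab ⟨0, hN⟩
          simpa using this
        rw [Function.comp_apply, hf.2, h0] at h0'
        exact h0'
    · intro hcase
      obtain ⟨b, hb, hblab⟩ := exists_max_chain c'
      have hN' : 1 ≤ altNum c' := one_le_altNum c'
      obtain ⟨t, htlt, hteq⟩ :
          ∃ t : ℕ, altNum c - 1 + t < altNum c' ∧ c' ⊥ + (t : Fin 2) = c ⊥ := by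
        rcases hcase with hlt | ⟨h1, h2⟩
        · by_cases hdd : c' ⊥ + ((altNum c' - altNum c : ℕ) : Fin 2) = c ⊥
          · exact ⟨altNum c' - altNum c, by omega, hdd⟩
          · refine ⟨altNum c' - altNum c - 1, by omega, ?_⟩
            have e : ((altNum c' - altNum c : ℕ) : Fin 2)
                = ((altNum c' - altNum c - 1 : ℕ) : Fin 2) + 1 := by
              conv_lhs => rw [show altNum c' - altNum c = (altNum c' - altNum c - 1) + 1 by omega]
              push_cast
              ring
            rw [e] at hdd
            revert hdd
            generalize ((altNum c' - altNum c - 1 : ℕ) : Fin 2) = u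
            generalize c' ⊥ = p
            generalize c ⊥ = q
            revert u p q
            decide
        · exact ⟨0, by omega, by simp [h2]⟩
      refine ⟨fun x => b ⟨hEnd c x - 1 + t,
        by have := hEnd_le_altNum c x; have := one_le_hEnd c x; omega⟩, ?_, ?_⟩
      · intro x y hxy
        have h1 := hEnd_mono c hxy
        have h2 := one_le_hEnd c x
        exact hb.1.monotone (Fin.mk_le_mk.mpr (by omega))
      · intro x
        show c' (b ⟨hEnd c x - 1 + t, _⟩) = c x
        rw [hblab, hEnd_label c x]
        show c' ⊥ + ((hEnd c x - 1 + t : ℕ) : Fin 2) = c ⊥ + ((hEnd c x - 1 : ℕ) : Fin 2)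
        rw [← hteq]
        push_cast
        abel
end

section
/- Fix k ≥ 1 and labels a, b ∈ {0, ..., k−1}. For bounded k-posets (P_1, c_1), (P_2, c_2) with top labeled a and bottom labeled b, the k-poset (P_1, c_1) ⊎ (P_2, c_2), obtained from the disjoint union by identifying the two tops into a single new top and the two bottoms into a single new bottom, is the supremum of (P_1, c_1) and (P_2, c_2) within the homomorphism order of bounded k-posets with top labeled a and bottom labeled b. -/
/-- The underlying set of `(X, Tx, Bx) ⊎ (Y, Ty, By)`: remove the distinguished
elements `Tx, Bx` and `Ty, By` from `X` and `Y`, take the disjoint union, and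
adjoin a new greatest and a new least element. -/
def Glue {X Y : Type*} (Tx Bx : X) (Ty By : Y) : Type _ :=
  WithTop (WithBot ({x : X // x ≠ Tx ∧ x ≠ Bx} ⊕ {y : Y // y ≠ Ty ∧ y ≠ By}))

instance {X Y : Type*} [PartialOrder X] [PartialOrder Y] (Tx Bx : X) (Ty By : Y) :
    PartialOrder (Glue Tx Bx Ty By) := by
  unfold Glue; infer_instance

instance {X Y : Type*} [PartialOrder X] [PartialOrder Y] (Tx Bx : X) (Ty By : Y) :
    BoundedOrder (Glue Tx Bx Ty By) := by
  unfold Glue; infer_instance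

/-- The labeling of the glued sum: the new top gets label `a`, the new bottom
gets label `b`, all other elements keep their labels. -/
def glueLabel {k : ℕ} {X Y : Type*} [PartialOrder X] [PartialOrder Y]
    {Tx Bx : X} {Ty By : Y} (cX : X → Fin k) (cY : Y → Fin k) (a b : Fin k) :
    Glue Tx Bx Ty By → Fin k :=
  fun x => WithTop.recTopCoe a
    (fun y => WithBot.recBotCoe b
      (Sum.elim (fun u => cX u.1) (fun v => cY v.1)) y)
    (x : WithTop (WithBot ({x : X // x ≠ Tx ∧ x ≠ Bx} ⊕ {y : Y // y ≠ Ty ∧ y ≠ By})))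

universe u

section Aux

variable {k : ℕ} {X Y : Type*} [PartialOrder X] [PartialOrder Y]
  [BoundedOrder X] [BoundedOrder Y]
  (cX : X → Fin k) (cY : Y → Fin k) (a b : Fin k)

/-- The element of the glue coming from an interior element. -/
def glueMk (z : {x : X // x ≠ (⊤ : X) ∧ x ≠ ⊥} ⊕ {y : Y // y ≠ (⊤ : Y) ∧ y ≠ ⊥}) :
    Glue (⊤ : X) ⊥ (⊤ : Y) ⊥ :=
  WithTop.some (WithBot.some z)

lemma glueMk_le_glueMk {z w} : glueMk (X := X) (Y := Y) z ≤ glueMk w ↔ z ≤ w := by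
  constructor
  · intro h
    exact WithBot.coe_le_coe.mp (WithTop.coe_le_coe.mp h)
  · intro h
    exact WithTop.coe_le_coe.mpr (WithBot.coe_le_coe.mpr h)

lemma glueLabel_top : glueLabel (Tx := (⊤:X)) (Bx := ⊥) (Ty := (⊤:Y)) (By := ⊥) cX cY a b ⊤ = a := rfl

lemma glueLabel_bot : glueLabel (Tx := (⊤:X)) (Bx := ⊥) (Ty := (⊤:Y)) (By := ⊥) cX cY a b ⊥ = b := rfl

lemma glueLabel_inl (u) :
    glueLabel cX cY a b (glueMk (Sum.inl u)) = cX u.1 := rfl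

lemma glueLabel_inr (v) :
    glueLabel cX cY a b (glueMk (Sum.inr v)) = cY v.1 := rfl

open Classical in
/-- The left embedding into the glue. -/
noncomputable def glueInl : X → Glue (⊤ : X) ⊥ (⊤ : Y) ⊥ := fun x =>
  if h : x = ⊤ then ⊤ else if h' : x = ⊥ then ⊥ else glueMk (Sum.inl ⟨x, h, h'⟩)

open Classical in
noncomputable def glueInr : Y → Glue (⊤ : X) ⊥ (⊤ : Y) ⊥ := fun y =>
  if h : y = ⊤ then ⊤ else if h' : y = ⊥ then ⊥ else glueMk (Sum.inr ⟨y, h, h'⟩)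

lemma glueInl_hom (ht : cX ⊤ = a) (hb : cX ⊥ = b) :
    IsKPosetHom cX (glueLabel cX cY a b) (glueInl (Y := Y)) := by
  constructor
  · intro x y hxy
    unfold glueInl
    by_cases hy : y = ⊤
    · simp [hy]
    · have hx : x ≠ ⊤ := fun h => hy (top_le_iff.mp (h ▸ hxy))
      by_cases hx' : x = ⊥
      · rw [dif_neg hx, dif_pos hx']; exact bot_le
      · have hy' : y ≠ ⊥ := fun h => hx' (le_bot_iff.mp (h ▸ hxy))
        simp only [dif_neg hx, dif_neg hx', dif_neg hy, dif_neg hy']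
        exact glueMk_le_glueMk.mpr (Sum.inl_le_inl_iff.mpr hxy)
  · intro x
    unfold glueInl
    by_cases h : x = ⊤
    · simp [h, glueLabel_top, ht]
    · by_cases h' : x = ⊥
      · subst h'; rw [dif_neg h, dif_pos rfl, hb]; rfl
      · simp [h, h', glueLabel_inl]

lemma glueInr_hom (ht : cY ⊤ = a) (hb : cY ⊥ = b) :
    IsKPosetHom cY (glueLabel cX cY a b) (glueInr (X := X)) := by
  constructor
  · intro x y hxy
    unfold glueInr
    by_cases hy : y = ⊤
    · simp [hy]
    · have hx : x ≠ ⊤ := fun h => hy (top_le_iff.mp (h ▸ hxy))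
      by_cases hx' : x = ⊥
      · rw [dif_neg hx, dif_pos hx']; exact bot_le
      · have hy' : y ≠ ⊥ := fun h => hx' (le_bot_iff.mp (h ▸ hxy))
        simp only [dif_neg hx, dif_neg hx', dif_neg hy, dif_neg hy']
        exact glueMk_le_glueMk.mpr (Sum.inr_le_inr_iff.mpr hxy)
  · intro y
    unfold glueInr
    by_cases h : y = ⊤
    · simp [h, glueLabel_top, ht]
    · by_cases h' : y = ⊥
      · subst h'; rw [dif_neg h, dif_pos rfl, hb]; rfl
      · simp [h, h', glueLabel_inr]

end Aux

/-- For bounded finite `k`-posets `P₁, P₂` with tops labeled `a` and bottoms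
labeled `b`, the glued sum `P₁ ⊎ P₂` is the supremum of `P₁` and `P₂` in the
homomorphism order of bounded finite `k`-posets with top labeled `a` and bottom
labeled `b`. -/
theorem glue_is_sup {k : ℕ} (a b : Fin k) {P₁ P₂ : Type*}
    [PartialOrder P₁] [PartialOrder P₂] [BoundedOrder P₁] [BoundedOrder P₂]
    [Fintype P₁] [Fintype P₂] (c₁ : P₁ → Fin k) (c₂ : P₂ → Fin k)
    (h₁t : c₁ ⊤ = a) (h₁b : c₁ ⊥ = b) (h₂t : c₂ ⊤ = a) (h₂b : c₂ ⊥ = b) :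
    (∃ f : P₁ → Glue (⊤ : P₁) ⊥ (⊤ : P₂) ⊥,
      IsKPosetHom c₁ (glueLabel c₁ c₂ a b) f) ∧
    (∃ f : P₂ → Glue (⊤ : P₁) ⊥ (⊤ : P₂) ⊥,
      IsKPosetHom c₂ (glueLabel c₁ c₂ a b) f) ∧
    ∀ (R : Type u) [PartialOrder R] [BoundedOrder R] [Fintype R] (d : R → Fin k),
      d ⊤ = a → d ⊥ = b →
      (∃ f : P₁ → R, IsKPosetHom c₁ d f) →
      (∃ f : P₂ → R, IsKPosetHom c₂ d f) →
      ∃ f : Glue (⊤ : P₁) ⊥ (⊤ : P₂) ⊥ → R,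
        IsKPosetHom (glueLabel c₁ c₂ a b) d f := by
  refine ⟨⟨glueInl, glueInl_hom c₁ c₂ a b h₁t h₁b⟩,
    ⟨glueInr, glueInr_hom c₁ c₂ a b h₂t h₂b⟩, ?_⟩
  intro R _ _ _ d hdt hdb ⟨g₁, hg₁m, hg₁l⟩ ⟨g₂, hg₂m, hg₂l⟩
  refine ⟨fun x => WithTop.recTopCoe ⊤
    (fun y => WithBot.recBotCoe ⊥
      (Sum.elim (fun u => g₁ u.1) (fun v => g₂ v.1)) y) x, ?_, ?_⟩
  · intro x y hxy
    induction y using WithTop.recTopCoe with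
    | top => exact le_top
    | coe y =>
      induction x using WithTop.recTopCoe with
      | top => exact absurd (top_le_iff.mp hxy) WithTop.coe_ne_top
      | coe x =>
        have hxy' : x ≤ y := WithTop.coe_le_coe.mp hxy
        induction x using WithBot.recBotCoe with
        | bot => exact bot_le
        | coe x =>
          induction y using WithBot.recBotCoe with
          | bot => exact absurd (le_bot_iff.mp hxy') WithBot.coe_ne_bot
          | coe y =>
            have hxy'' : x ≤ y := WithBot.coe_le_coe.mp hxy'
            cases x with
            | inl u =>
              cases y with
              | inl u' => exact hg₁m (Subtype.coe_le_coe.mpr (Sum.inl_le_inl_iff.mp hxy''))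
              | inr v' => exact absurd hxy'' (by simp [Sum.LiftRel])
            | inr v =>
              cases y with
              | inl u' => exact absurd hxy'' (by simp [Sum.LiftRel])
              | inr v' => exact hg₂m (Subtype.coe_le_coe.mpr (Sum.inr_le_inr_iff.mp hxy''))
  · intro x
    induction x using WithTop.recTopCoe with
    | top => exact hdt
    | coe x =>
      induction x using WithBot.recBotCoe with
      | bot => exact hdb
      | coe x =>
        cases x with
        | inl u => exact hg₁l u.1
        | inr v => exact hg₂l v.1
end

section
/- Fix k ≥ 1 and a, b ∈ {0, ..., k−1}. For bounded k-posets P_1, P_2, P_3 with top labeled a and bottom labeled b, the distributive law P_1 ⊗ (P_2 ⊎ P_3) ≡ (P_1 ⊗ P_2) ⊎ (P_1 ⊗ P_3) holds, where ≡ denotes homomorphic equivalence of k-posets. -/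
open Classical in
/-- Embed `X` into the glued sum (left summand), sending `⊤` to the new top
and `⊥` to the new bottom. -/
noncomputable def glueEmbL {X Y : Type*} [PartialOrder X] [PartialOrder Y] [BoundedOrder X]
    (Ty By : Y) : X → Glue (⊤ : X) (⊥ : X) Ty By := fun x =>
  if h : x = ⊤ then ⊤ else if h' : x = ⊥ then ⊥
  else (((Sum.inl ⟨x, h, h'⟩ :
      {x : X // x ≠ ⊤ ∧ x ≠ ⊥} ⊕ {y : Y // y ≠ Ty ∧ y ≠ By}) :
      WithBot ({x : X // x ≠ ⊤ ∧ x ≠ ⊥} ⊕ {y : Y // y ≠ Ty ∧ y ≠ By})) :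
      WithTop (WithBot ({x : X // x ≠ ⊤ ∧ x ≠ ⊥} ⊕ {y : Y // y ≠ Ty ∧ y ≠ By})))

open Classical in
/-- Embed `Y` into the glued sum (right summand), sending `⊤` to the new top
and `⊥` to the new bottom. -/
noncomputable def glueEmbR {X Y : Type*} [PartialOrder X] [PartialOrder Y] [BoundedOrder Y]
    (Tx Bx : X) : Y → Glue Tx Bx (⊤ : Y) (⊥ : Y) := fun y =>
  if h : y = ⊤ then ⊤ else if h' : y = ⊥ then ⊥
  else (((Sum.inr ⟨y, h, h'⟩ :
      {x : X // x ≠ Tx ∧ x ≠ Bx} ⊕ {y : Y // y ≠ ⊤ ∧ y ≠ ⊥}) :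
      WithBot ({x : X // x ≠ Tx ∧ x ≠ Bx} ⊕ {y : Y // y ≠ ⊤ ∧ y ≠ ⊥})) :
      WithTop (WithBot ({x : X // x ≠ Tx ∧ x ≠ Bx} ⊕ {y : Y // y ≠ ⊤ ∧ y ≠ ⊥})))

theorem glueEmbL_mono {X Y : Type*} [PartialOrder X] [PartialOrder Y] [BoundedOrder X]
    (Ty By : Y) : Monotone (glueEmbL (X := X) Ty By) := by
  intro x y hxy
  by_cases hx : x = ⊤
  · have hy : y = ⊤ := top_le_iff.mp (hx ▸ hxy)
    simp [glueEmbL, hx, hy]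
  by_cases hx' : x = ⊥
  · simp only [glueEmbL, dif_neg hx, dif_pos hx']
    erw [dif_pos hx']
    exact bot_le
  by_cases hy : y = ⊤
  · simp only [glueEmbL, dif_pos hy]
    exact le_top
  have hy' : y ≠ ⊥ := fun h => hx' (le_bot_iff.mp (h ▸ hxy))
  simp only [glueEmbL, dif_neg hx, dif_neg hx', dif_neg hy, dif_neg hy']
  erw [dif_neg hx', dif_neg hy']
  exact WithTop.coe_le_coe.mpr (WithBot.coe_le_coe.mpr
    (Sum.inl_le_inl_iff.mpr (Subtype.mk_le_mk.mpr hxy)))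

theorem glueEmbR_mono {X Y : Type*} [PartialOrder X] [PartialOrder Y] [BoundedOrder Y]
    (Tx Bx : X) : Monotone (glueEmbR (Y := Y) Tx Bx) := by
  intro x y hxy
  by_cases hx : x = ⊤
  · have hy : y = ⊤ := top_le_iff.mp (hx ▸ hxy)
    simp [glueEmbR, hx, hy]
  by_cases hx' : x = ⊥
  · simp only [glueEmbR, dif_neg hx, dif_pos hx']
    erw [dif_pos hx']
    exact bot_le
  by_cases hy : y = ⊤
  · simp only [glueEmbR, dif_pos hy]
    exact le_top
  have hy' : y ≠ ⊥ := fun h => hx' (le_bot_iff.mp (h ▸ hxy))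
  simp only [glueEmbR, dif_neg hx, dif_neg hx', dif_neg hy, dif_neg hy']
  erw [dif_neg hx', dif_neg hy']
  exact WithTop.coe_le_coe.mpr (WithBot.coe_le_coe.mpr
    (Sum.inr_le_inr_iff.mpr (Subtype.mk_le_mk.mpr hxy)))

theorem glueLabel_glueEmbL {k : ℕ} {X Y : Type*} [PartialOrder X] [PartialOrder Y]
    [BoundedOrder X] {Ty By : Y} (cX : X → Fin k) (cY : Y → Fin k) {a b : Fin k}
    (ht : cX ⊤ = a) (hb : cX ⊥ = b) (x : X) :
    glueLabel cX cY a b (glueEmbL Ty By x) = cX x := by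
  unfold glueEmbL
  split_ifs with h1 h2
  · subst h1; exact ht.symm
  · subst h2; erw [dif_pos rfl]; exact hb.symm
  · erw [dif_neg h2]; rfl

theorem glueLabel_glueEmbR {k : ℕ} {X Y : Type*} [PartialOrder X] [PartialOrder Y]
    [BoundedOrder Y] {Tx Bx : X} (cX : X → Fin k) (cY : Y → Fin k) {a b : Fin k}
    (ht : cY ⊤ = a) (hb : cY ⊥ = b) (y : Y) :
    glueLabel cX cY a b (glueEmbR Tx Bx y) = cY y := by
  unfold glueEmbR
  split_ifs with h1 h2
  · subst h1; exact ht.symm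
  · subst h2; erw [dif_pos rfl]; exact hb.symm
  · erw [dif_neg h2]; rfl

/-- The distributive law `P₁ ⊗ (P₂ ⊎ P₃) ≡ (P₁ ⊗ P₂) ⊎ (P₁ ⊗ P₃)` for bounded
finite `k`-posets with top labeled `a` and bottom labeled `b`, where `≡` is
homomorphic equivalence, `⊗` the label-matching product and `⊎` the glued sum. -/
theorem prod_glue_distrib {k : ℕ} (a b : Fin k) {P₁ P₂ P₃ : Type*}
    [PartialOrder P₁] [PartialOrder P₂] [PartialOrder P₃]
    [BoundedOrder P₁] [BoundedOrder P₂] [BoundedOrder P₃]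
    [Fintype P₁] [Fintype P₂] [Fintype P₃]
    (c₁ : P₁ → Fin k) (c₂ : P₂ → Fin k) (c₃ : P₃ → Fin k)
    (h₁t : c₁ ⊤ = a) (h₁b : c₁ ⊥ = b) (h₂t : c₂ ⊤ = a) (h₂b : c₂ ⊥ = b)
    (h₃t : c₃ ⊤ = a) (h₃b : c₃ ⊥ = b) :
    -- `P₁ ⊗ (P₂ ⊎ P₃)` with its labeling, versus `(P₁ ⊗ P₂) ⊎ (P₁ ⊗ P₃)`:
    let lhsLabel : {p : P₁ × Glue (⊤ : P₂) ⊥ (⊤ : P₃) ⊥ //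
        c₁ p.1 = glueLabel c₂ c₃ a b p.2} → Fin k := fun p => c₁ p.1.1
    let T₁₂ : {p : P₁ × P₂ // c₁ p.1 = c₂ p.2} := ⟨(⊤, ⊤), h₁t.trans h₂t.symm⟩
    let B₁₂ : {p : P₁ × P₂ // c₁ p.1 = c₂ p.2} := ⟨(⊥, ⊥), h₁b.trans h₂b.symm⟩
    let T₁₃ : {p : P₁ × P₃ // c₁ p.1 = c₃ p.2} := ⟨(⊤, ⊤), h₁t.trans h₃t.symm⟩
    let B₁₃ : {p : P₁ × P₃ // c₁ p.1 = c₃ p.2} := ⟨(⊥, ⊥), h₁b.trans h₃b.symm⟩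
    let rhsLabel : Glue T₁₂ B₁₂ T₁₃ B₁₃ → Fin k :=
      glueLabel (fun p => c₁ p.1.1) (fun p => c₁ p.1.1) a b
    (∃ f, IsKPosetHom lhsLabel rhsLabel f) ∧ (∃ g, IsKPosetHom rhsLabel lhsLabel g) := by
  intro lhsLabel T₁₂ B₁₂ T₁₃ B₁₃ rhsLabel
  constructor
  · -- forward homomorphism
    refine ⟨fun x =>
      match x with
      | ⟨(p, Option.none), _⟩ => (⊤ : Glue T₁₂ B₁₂ T₁₃ B₁₃)
      | ⟨(p, Option.some Option.none), _⟩ => (⊥ : Glue T₁₂ B₁₂ T₁₃ B₁₃)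
      | ⟨(p, Option.some (Option.some (Sum.inl u))), h⟩ =>
          (Option.some (Option.some (Sum.inl ⟨⟨(p, u.1), h⟩,
              fun e => u.2.1 (congrArg (fun t => t.1.2) e),
              fun e => u.2.2 (congrArg (fun t => t.1.2) e)⟩)) :
            Glue T₁₂ B₁₂ T₁₃ B₁₃)
      | ⟨(p, Option.some (Option.some (Sum.inr v))), h⟩ =>
          (Option.some (Option.some (Sum.inr ⟨⟨(p, v.1), h⟩,
              fun e => v.2.1 (congrArg (fun t => t.1.2) e),
              fun e => v.2.2 (congrArg (fun t => t.1.2) e)⟩)) :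
            Glue T₁₂ B₁₂ T₁₃ B₁₃),
      ?_, ?_⟩
    · rintro ⟨⟨p, z⟩, hz⟩ ⟨⟨q, w⟩, hw⟩ ⟨hpq, hzw⟩
      cases z with
      | none =>
        have : w = ⊤ := top_le_iff.mp hzw
        subst this
        exact le_rfl
      | some z' =>
        cases w with
        | none => exact le_top
        | some w' =>
          have hzw' : z' ≤ w' := WithTop.coe_le_coe.mp hzw
          cases z' with
          | bot => exact bot_le
          | coe s =>
            cases w' with
            | bot => exact absurd (le_bot_iff.mp hzw') (WithBot.coe_ne_bot)
            | coe t =>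
              have hst : s ≤ t := WithBot.coe_le_coe.mp hzw'
              cases s with
              | inl u =>
                cases t with
                | inl u' =>
                  exact WithTop.coe_le_coe.mpr (WithBot.coe_le_coe.mpr
                    (Sum.inl_le_inl_iff.mpr (Subtype.mk_le_mk.mpr
                      (Prod.mk_le_mk.mpr ⟨hpq,
                        Subtype.coe_le_coe.mpr (Sum.inl_le_inl_iff.mp hst)⟩))))
                | inr v' => exact absurd hst Sum.not_inl_le_inr
              | inr v =>
                cases t with
                | inl u' => exact absurd hst Sum.not_inr_le_inl
                | inr v' =>
                  exact WithTop.coe_le_coe.mpr (WithBot.coe_le_coe.mpr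
                    (Sum.inr_le_inr_iff.mpr (Subtype.mk_le_mk.mpr
                      (Prod.mk_le_mk.mpr ⟨hpq,
                        Subtype.coe_le_coe.mpr (Sum.inr_le_inr_iff.mp hst)⟩))))
    · rintro ⟨⟨p, z⟩, hz⟩
      cases z with
      | none => exact hz.symm
      | some z' =>
        cases z' with
        | bot => exact hz.symm
        | coe s =>
          cases s with
          | inl u => rfl
          | inr v => rfl
  · -- backward homomorphism
    refine ⟨fun x =>
      match x with
      | Option.none => ⟨(⊤, ⊤), h₁t⟩
      | Option.some Option.none => ⟨(⊥, ⊥), h₁b⟩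
      | Option.some (Option.some (Sum.inl ⟨⟨(p, q), hpq⟩, hne⟩)) =>
          ⟨(p, glueEmbL (⊤ : P₃) ⊥ q),
            hpq.trans (glueLabel_glueEmbL c₂ c₃ h₂t h₂b q).symm⟩
      | Option.some (Option.some (Sum.inr ⟨⟨(p, q), hpq⟩, hne⟩)) =>
          ⟨(p, glueEmbR (⊤ : P₂) ⊥ q),
            hpq.trans (glueLabel_glueEmbR c₂ c₃ h₃t h₃b q).symm⟩,
      ?_, ?_⟩
    · intro x y hxy
      cases x with
      | none =>
        have : y = ⊤ := top_le_iff.mp hxy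
        subst this
        exact le_rfl
      | some x' =>
        cases y with
        | none => exact ⟨le_top, le_top⟩
        | some y' =>
          have hxy' : x' ≤ y' := WithTop.coe_le_coe.mp hxy
          cases x' with
          | bot => exact ⟨bot_le, bot_le⟩
          | coe s =>
            cases y' with
            | bot => exact absurd (le_bot_iff.mp hxy') (WithBot.coe_ne_bot)
            | coe t =>
              have hst : s ≤ t := WithBot.coe_le_coe.mp hxy'
              cases s with
              | inl u =>
                cases t with
                | inl u' =>
                  obtain ⟨⟨⟨p, q⟩, hpq⟩, hne⟩ := u
                  obtain ⟨⟨⟨p', q'⟩, hpq'⟩, hne'⟩ := u'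
                  obtain ⟨hp, hq⟩ := Subtype.mk_le_mk.mp (Sum.inl_le_inl_iff.mp hst)
                  exact ⟨hp, glueEmbL_mono _ _ hq⟩
                | inr v' => exact absurd hst Sum.not_inl_le_inr
              | inr v =>
                cases t with
                | inl u' => exact absurd hst Sum.not_inr_le_inl
                | inr v' =>
                  obtain ⟨⟨⟨p, q⟩, hpq⟩, hne⟩ := v
                  obtain ⟨⟨⟨p', q'⟩, hpq'⟩, hne'⟩ := v'
                  obtain ⟨hp, hq⟩ := Subtype.mk_le_mk.mp (Sum.inr_le_inr_iff.mp hst)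
                  exact ⟨hp, glueEmbR_mono _ _ hq⟩
    · intro x
      cases x with
      | none => exact h₁t
      | some x' =>
        cases x' with
        | bot => exact h₁b
        | coe s =>
          cases s with
          | inl u => obtain ⟨⟨⟨p, q⟩, hpq⟩, hne⟩ := u; rfl
          | inr v => obtain ⟨⟨⟨p, q⟩, hpq⟩, hne⟩ := v; rfl
end
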